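/- arXiv:1107.4860 — 10 statements merged into one kernel-verified Lean document; each statement's English description precedes it below -/
import Mathlib

section
/- Let R be a commutative ring and f ∈ R[[X]]. Suppose f₀ = ab with (a,b) = R, and choose r, s ∈ R with ra + sb = 1. Define g ∈ R[[X]] by g₀ = 0 and gₙ = fₙ − rs·∑_{i=1}^{n−1} g_i g_{n−i} for n ≥ 1. Then f = (a + s g)(b + r g), and g is the unique power series with constant term 0 satisfying this equation; moreover (a + sg, b + rg) = R[[X]]. -/
/-!
Since `r * a + s * b = 1`, the product `(a + s G)(b + r G)` expands to `a b + G + r s G²`. Comparing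
coefficients, `f = a b + G + r s G²` with `G₀ = 0` says precisely that the coefficients of `G` obey
the recursion defining `g`, which determines them one by one. Comaximality holds because
`r (a + s g) + s (b + r g)` has constant coefficient `r a + s b = 1`, hence is a unit of `R⟦X⟧`.
-/

open PowerSeries Finset

theorem eq_of_quadratic_recursion {R : Type*} [Ring R] {u v F : ℕ → R} {d : R} (h0 : u 0 = v 0)
    (hu : ∀ n, 1 ≤ n → u n = F n - d * ∑ i ∈ Ioo 0 n, u i * u (n - i))
    (hv : ∀ n, 1 ≤ n → v n = F n - d * ∑ i ∈ Ioo 0 n, v i * v (n - i)) : u = v := by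
  funext n
  induction n using Nat.strong_induction_on with
  | _ n ih =>
    rcases Nat.eq_zero_or_pos n with rfl | hn
    · exact h0
    · rw [hu n hn, hv n hn]
      congr 2
      refine sum_congr rfl fun i hi => ?_
      rw [mem_Ioo] at hi
      rw [ih i hi.2, ih (n - i) (by omega)]

namespace PowerSeries

theorem coeff_sq_eq_sum_Ioo {R : Type*} [Semiring R] {G : R⟦X⟧} (hG : constantCoeff G = 0)
    (n : ℕ) : coeff n (G ^ 2) = ∑ i ∈ Ioo 0 n, coeff i G * coeff (n - i) G := by
  rw [sq, coeff_mul, Nat.sum_antidiagonal_eq_sum_range_succ_mk]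
  rcases n with _ | n
  · simp [hG]
  · rw [sum_range_succ, sum_range_eq_add_Ico _ (by omega : 0 < n + 1),
      ← Ico_add_one_left_eq_Ioo, zero_add]
    simp [hG]

theorem mul_eq_C_add_add_C_mul_sq {R : Type*} [CommSemiring R] {a b r s : R}
    (hrs : r * a + s * b = 1) (G : R⟦X⟧) :
    (C a + C s * G) * (C b + C r * G) = C (a * b) + G + C (r * s) * G ^ 2 := by
  have h : (C a + C s * G) * (C b + C r * G) =
      C (a * b) + C (r * a + s * b) * G + C (r * s) * G ^ 2 := by
    simp only [map_add, map_mul]; ring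
  rw [h, hrs, map_one, one_mul]

theorem eq_C_add_add_C_mul_sq_iff {R : Type*} [CommRing R] {f G : R⟦X⟧} {c d : R}
    (hG : constantCoeff G = 0) :
    f = C c + G + C d * G ^ 2 ↔ constantCoeff f = c ∧
      ∀ n, 1 ≤ n → coeff n G = coeff n f - d * ∑ i ∈ Ioo 0 n, coeff i G * coeff (n - i) G := by
  have hcoeff (n : ℕ) : coeff n (C c + G + C d * G ^ 2) =
      (if n = 0 then c else 0) + coeff n G + d * ∑ i ∈ Ioo 0 n, coeff i G * coeff (n - i) G := by
    rw [map_add, map_add, coeff_C, coeff_C_mul, coeff_sq_eq_sum_Ioo hG]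
  rw [PowerSeries.ext_iff]
  constructor
  · intro h
    refine ⟨by simpa [hcoeff, hG] using h 0, fun n hn => ?_⟩
    rw [h n, hcoeff, if_neg (by omega)]
    ring
  · rintro ⟨h0, hrec⟩ (_ | n)
    · simp [hcoeff, hG, h0]
    · rw [hcoeff, hrec _ n.succ_pos, if_neg n.succ_ne_zero]
      ring

theorem isCoprime_of_isCoprime_constantCoeff {R : Type*} [CommRing R] {A B : R⟦X⟧}
    (h : IsCoprime (constantCoeff A) (constantCoeff B)) : IsCoprime A B := by
  obtain ⟨r, s, hrs⟩ := h
  obtain ⟨u, hu⟩ : IsUnit (C r * A + C s * B) := by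
    rw [isUnit_iff_constantCoeff]
    simp [hrs]
  refine ⟨↑u⁻¹ * C r, ↑u⁻¹ * C s, ?_⟩
  rw [mul_assoc, mul_assoc, ← mul_add, ← hu, Units.inv_mul]

end PowerSeries

theorem stmt_1 {R : Type*} [CommRing R] (f : PowerSeries R) (a b r s : R)
    (hab : PowerSeries.constantCoeff f = a * b) (hrs : r * a + s * b = 1)
    (g : ℕ → R) (hg0 : g 0 = 0)
    (hgn : ∀ n : ℕ, 1 ≤ n →
      g n = PowerSeries.coeff n f - r * s * ∑ i ∈ Finset.Ioo 0 n, g i * g (n - i)) :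
    f = (PowerSeries.C a + PowerSeries.C s * PowerSeries.mk g) *
        (PowerSeries.C b + PowerSeries.C r * PowerSeries.mk g) ∧
    (∀ g' : PowerSeries R, PowerSeries.constantCoeff g' = 0 →
      f = (PowerSeries.C a + PowerSeries.C s * g') *
          (PowerSeries.C b + PowerSeries.C r * g') → g' = PowerSeries.mk g) ∧
    Ideal.span {PowerSeries.C a + PowerSeries.C s * PowerSeries.mk g,
      PowerSeries.C b + PowerSeries.C r * PowerSeries.mk g} = ⊤ := by
  have hG0 : constantCoeff (mk g) = 0 := by simp [hg0]
  refine ⟨?_, fun g' hg'0 hf => ?_, ?_⟩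
  · rw [mul_eq_C_add_add_C_mul_sq hrs, eq_C_add_add_C_mul_sq_iff hG0]
    simpa using ⟨hab, hgn⟩
  · rw [mul_eq_C_add_add_C_mul_sq hrs, eq_C_add_add_C_mul_sq_iff hg'0] at hf
    ext n
    rw [coeff_mk]
    exact congrFun (eq_of_quadratic_recursion (u := fun n => coeff n g') (by simpa [hg0] using hg'0)
      hf.2 hgn) n
  · rw [Ideal.span_insert, Ideal.sup_eq_top_iff_isCoprime]
    exact isCoprime_of_isCoprime_constantCoeff (by simpa [hg0] using ⟨r, s, hrs⟩)
end

section
/- Let R be an integral domain and f ∈ R[[X]] with unit coefficient f₁ (i.e., (f₁) = R). Then f is irreducible in R[[X]] if and only if (f₀) ≠ R and for any a, b ∈ R with f₀ = ab and (a,b) = R, one has (a) = R or (b) = R. -/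
/-!
If `f = g * h`, then `f₁ = g₀ h₁ + g₁ h₀`, so when `f₁` is a unit the constant coefficients
`g₀, h₀` of any factorization are coprime; and `g` or `h` is a unit exactly when `g₀` or `h₀` is.
Conversely, every factorization `f₀ = a b` with `u a + v b = 1` lifts, coefficient by coefficient,
to a factorization `f = g h` with `g₀ = a`, `h₀ = b`. Hence irreducible factorizations of `f`
correspond to coprime factorizations of `f₀`.
-/

open Finset

namespace PowerSeries

variable {R : Type*} [CommRing R]

/-- The coefficients of the lift of `f₀ = a * b`, where `u * a + v * b = 1`: the `n`-th
coefficients are `v c` and `u c`, with `c` the part of `fₙ` not yet accounted for by lower ones. -/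
noncomputable def coprimeFactorCoeffs (f : R⟦X⟧) (a b u v : R) : ℕ → R × R
  | 0 => (a, b)
  | n + 1 =>
    let c := coeff (n + 1) f - ∑ i ∈ (range n).attach,
      (coprimeFactorCoeffs f a b u v (i.1 + 1)).1 * (coprimeFactorCoeffs f a b u v (n - i.1)).2
    (v * c, u * c)
  decreasing_by
  · exact Nat.succ_lt_succ (mem_range.mp i.2)
  · exact Nat.lt_succ_of_le (Nat.sub_le n i.1)

theorem coprimeFactorCoeffs_succ (f : R⟦X⟧) (a b u v : R) (n : ℕ) :
    coprimeFactorCoeffs f a b u v (n + 1) =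
      let c := coeff (n + 1) f - ∑ i ∈ range n,
        (coprimeFactorCoeffs f a b u v (i + 1)).1 * (coprimeFactorCoeffs f a b u v (n - i)).2
      (v * c, u * c) := by
  rw [coprimeFactorCoeffs, sum_attach (range n)
    (fun i ↦ (coprimeFactorCoeffs f a b u v (i + 1)).1 * (coprimeFactorCoeffs f a b u v (n - i)).2)]

theorem mk_coprimeFactorCoeffs_mul {f : R⟦X⟧} {a b u v : R} (hab : constantCoeff f = a * b)
    (huv : u * a + v * b = 1) :
    mk (fun n ↦ (coprimeFactorCoeffs f a b u v n).1) *
      mk (fun n ↦ (coprimeFactorCoeffs f a b u v n).2) = f := by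
  set G := fun n ↦ (coprimeFactorCoeffs f a b u v n).1
  set H := fun n ↦ (coprimeFactorCoeffs f a b u v n).2
  have hG0 : G 0 = a := by simp only [G, coprimeFactorCoeffs]
  have hH0 : H 0 = b := by simp only [H, coprimeFactorCoeffs]
  ext n
  rw [coeff_mul, Nat.sum_antidiagonal_eq_sum_range_succ_mk]
  simp only [coeff_mk]
  cases n with
  | zero => simp [hG0, hH0, ← hab]
  | succ m =>
    set S := ∑ i ∈ range m, G (i + 1) * H (m - i)
    have hG : G (m + 1) = v * (coeff (m + 1) f - S) :=
      congrArg Prod.fst (coprimeFactorCoeffs_succ f a b u v m)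
    have hH : H (m + 1) = u * (coeff (m + 1) f - S) :=
      congrArg Prod.snd (coprimeFactorCoeffs_succ f a b u v m)
    rw [sum_range_succ, sum_range_succ']
    simp only [Nat.add_sub_add_right, Nat.sub_self, Nat.sub_zero, hG, hH, hG0, hH0]
    linear_combination (coeff (m + 1) f - S) * huv

theorem exists_mul_eq_of_constantCoeff_eq_mul {f : R⟦X⟧} {a b : R}
    (hab : constantCoeff f = a * b) (hcop : IsCoprime a b) :
    ∃ g h : R⟦X⟧, g * h = f ∧ constantCoeff g = a ∧ constantCoeff h = b := by
  obtain ⟨u, v, huv⟩ := hcop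
  refine ⟨_, _, mk_coprimeFactorCoeffs_mul hab huv, ?_, ?_⟩ <;>
    simp [← coeff_zero_eq_constantCoeff_apply, coprimeFactorCoeffs]

theorem isCoprime_constantCoeff_of_isUnit_coeff_one_mul {g h : R⟦X⟧}
    (hgh : IsUnit (coeff 1 (g * h))) : IsCoprime (constantCoeff g) (constantCoeff h) := by
  obtain ⟨w, hw⟩ := hgh.exists_left_inv
  rw [coeff_one_mul] at hw
  exact ⟨w * coeff 1 h, w * coeff 1 g, by linear_combination hw⟩

theorem irreducible_iff_of_isUnit_coeff_one {f : R⟦X⟧} (hf1 : IsUnit (coeff 1 f)) :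
    Irreducible f ↔ ¬IsUnit (constantCoeff f) ∧
      ∀ a b : R, constantCoeff f = a * b → IsCoprime a b → IsUnit a ∨ IsUnit b := by
  refine ⟨fun hf ↦ ⟨fun h0 ↦ hf.not_isUnit (isUnit_iff_constantCoeff.mpr h0), ?_⟩,
    fun ⟨h0, H⟩ ↦ ⟨fun hu ↦ h0 (isUnit_constantCoeff f hu), ?_⟩⟩
  · intro a b hab hcop
    obtain ⟨g, h, rfl, rfl, rfl⟩ := exists_mul_eq_of_constantCoeff_eq_mul hab hcop
    exact (hf.isUnit_or_isUnit rfl).imp (isUnit_constantCoeff g) (isUnit_constantCoeff h)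
  · rintro g h rfl
    exact (H _ _ (map_mul _ g h) (isCoprime_constantCoeff_of_isUnit_coeff_one_mul hf1)).imp
      isUnit_iff_constantCoeff.mpr isUnit_iff_constantCoeff.mpr

end PowerSeries

theorem stmt_2_general {R : Type*} [CommRing R] (f : PowerSeries R)
    (hf1 : Ideal.span {PowerSeries.coeff 1 f} = ⊤) :
    Irreducible f ↔
      (Ideal.span {PowerSeries.constantCoeff f} ≠ ⊤ ∧
        ∀ a b : R, PowerSeries.constantCoeff f = a * b → Ideal.span {a, b} = ⊤ →
          Ideal.span {a} = ⊤ ∨ Ideal.span {b} = ⊤) := by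
  simp only [Ideal.span_singleton_eq_top, Ideal.span_insert, Ideal.sup_eq_top_iff_isCoprime,
    ne_eq] at hf1 ⊢
  exact PowerSeries.irreducible_iff_of_isUnit_coeff_one hf1

theorem stmt_2 {R : Type*} [CommRing R] [IsDomain R] (f : PowerSeries R)
    (hf1 : Ideal.span {PowerSeries.coeff 1 f} = ⊤) :
    Irreducible f ↔
      (Ideal.span {PowerSeries.constantCoeff f} ≠ ⊤ ∧
        ∀ a b : R, PowerSeries.constantCoeff f = a * b → Ideal.span {a, b} = ⊤ →
          Ideal.span {a} = ⊤ ∨ Ideal.span {b} = ⊤) :=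
  stmt_2_general f hf1
end

section
/- Let R be a UFD that is not a PID, and let π, σ ∈ R be nonassociate prime elements with (π, σ) ≠ R. Then for any unit U of R[[X]], the power series πσ + XU is irreducible in R[[X]]. -/
/-!
If `πσ + XU = a * b` with `a`, `b` non-units, then the constant terms satisfy
`a₀ * b₀ = πσ` with neither a unit, so each
is divisible by `π` or by `σ` and lies in `(π, σ)`.
The linear coefficient `a₁ b₀ + b₁ a₀` of `a * b` then also lies in `(π, σ)`, but it equals the
constant term of the unit `U`, forcing `(π, σ) = R`.
-/

open PowerSeries

theorem dvd_or_dvd_of_mul_eq_mul_of_not_isUnit {M : Type*} [CommMonoidWithZero M]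
    [IsCancelMulZero M] {p q a b : M} (hp : Prime p) (hq : Irreducible q) (h : a * b = p * q)
    (ha : ¬IsUnit a) :
    p ∣ a ∨ q ∣ a := by
  rcases hp.dvd_or_dvd (h ▸ dvd_mul_right p q) with hpa | ⟨c, rfl⟩
  · exact Or.inl hpa
  · have hac : q = a * c := mul_left_cancel₀ hp.ne_zero (by rw [← h, mul_left_comm])
    have hc : IsUnit c := (hq.isUnit_or_isUnit hac).resolve_left ha
    exact Or.inr (Associated.symm ⟨hc.unit, hac.symm⟩).dvd

theorem mem_span_pair_of_mul_eq_mul_of_not_isUnit {R : Type*} [CommRing R] [IsDomain R]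
    {p q a b : R} (hp : Prime p) (hq : Irreducible q) (h : a * b = p * q) (ha : ¬IsUnit a) :
    a ∈ Ideal.span {p, q} := by
  rcases dvd_or_dvd_of_mul_eq_mul_of_not_isUnit hp hq h ha with hpa | hqa
  · exact Ideal.mem_of_dvd _ hpa (Ideal.subset_span (by simp))
  · exact Ideal.mem_of_dvd _ hqa (Ideal.subset_span (by simp))

theorem PowerSeries.coeff_one_mul_mem_span_constantCoeff {R : Type*} [CommRing R]
    (φ ψ : R⟦X⟧) : coeff 1 (φ * ψ) ∈ Ideal.span {constantCoeff φ, constantCoeff ψ} :=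
  Ideal.mem_span_pair.mpr ⟨coeff 1 ψ, coeff 1 φ, by rw [coeff_one_mul]; ring⟩

theorem stmt_4_general {R : Type*} [CommRing R] [IsDomain R]
    (π σ : R) (hπ : Prime π) (hσ : Prime σ)
    (hps : Ideal.span {π, σ} ≠ ⊤)
    (U : (PowerSeries R)ˣ) :
    Irreducible (PowerSeries.C (π * σ) + PowerSeries.X * (U : PowerSeries R)) := by
  set f := C (π * σ) + X * (U : R⟦X⟧)
  have hf₀ : constantCoeff f = π * σ := by simp [f]
  have hf₁ : IsUnit (coeff 1 f) := by
    simpa [f, coeff_zero_eq_constantCoeff] using isUnit_constantCoeff _ U.isUnit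
  refine ⟨fun hunit => hπ.not_isUnit ?_, fun a b hab => ?_⟩
  · exact isUnit_of_mul_isUnit_left (hf₀ ▸ (isUnit_iff_constantCoeff.mp hunit))
  by_contra! ⟨ha, hb⟩
  rw [isUnit_iff_constantCoeff] at ha hb
  have hab₀ : constantCoeff a * constantCoeff b = π * σ := by rw [← map_mul, ← hab, hf₀]
  have hspan : Ideal.span {constantCoeff a, constantCoeff b} ≤ Ideal.span {π, σ} := by
    rw [Ideal.span_le, Set.insert_subset_iff, Set.singleton_subset_iff]
    have hba₀ : constantCoeff b * constantCoeff a = π * σ := (mul_comm _ _).trans hab₀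
    exact ⟨mem_span_pair_of_mul_eq_mul_of_not_isUnit hπ hσ.irreducible hab₀ ha,
      mem_span_pair_of_mul_eq_mul_of_not_isUnit hπ hσ.irreducible hba₀ hb⟩
  exact hps (Ideal.eq_top_of_isUnit_mem _
    (hspan (hab ▸ coeff_one_mul_mem_span_constantCoeff a b)) hf₁)

theorem stmt_4 {R : Type*} [CommRing R] [IsDomain R] [UniqueFactorizationMonoid R]
    (hnotpid : ¬IsPrincipalIdealRing R) (π σ : R) (hπ : Prime π) (hσ : Prime σ)
    (hassoc : ¬Associated π σ) (hps : Ideal.span {π, σ} ≠ ⊤)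
    (U : (PowerSeries R)ˣ) :
    Irreducible (PowerSeries.C (π * σ) + PowerSeries.X * (U : PowerSeries R)) :=
  stmt_4_general π σ hπ hσ hps U
end

section
/- Let R be a commutative ring and f ∈ R[[X]]. Suppose f₀ = a₁a₂⋯a_k where the a_i are pairwise coprime elements of R. Then there exist b₁,…,b_k ∈ R with ∑_i b_i ∏_{j≠i} a_j = 1, and a unique g ∈ X·R[[X]] such that f = (a₁ + b₁g)(a₂ + b₂g)⋯(a_k + b_kg); moreover the factors a_i + b_i g are pairwise coprime in R[[X]]. -/
/-!
Choose `b` with `∑ bᵢ ∏_{j ≠ i} aⱼ = 1`, possible because the `aᵢ` are pairwise coprime. Then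
`∏ (aᵢ + bᵢ Y)` is a polynomial `L(Y)` over `R` with `L(0) = f₀` and `L'(0) = 1`, and the
factorization asks for a root `g ∈ X R⟦X⟧` of `L(Y) - f`. This is Hensel's lemma for a simple
root in the `X`-adically complete ring `R⟦X⟧`, in a form that needs no monicity and gives
uniqueness: the chord map `u ↦ u - L'(0)⁻¹ (L(u) - f)` raises the `X`-adic order of differences
on `X R⟦X⟧`, so it has a unique fixed point there. The factors are pairwise coprime because their
constant terms are, and a power series with unit constant term is a unit.
-/

open scoped Polynomial

section AdicComplete

variable {A : Type*} [CommRing A] {I : Ideal A}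

theorem Ideal.sub_mem_pow_iff_smodEq {x y : A} {n : ℕ} :
    x - y ∈ I ^ n ↔ x ≡ y [SMOD (I ^ n • ⊤ : Submodule A A)] := by
  rw [SModEq.sub_mem, Ideal.smul_eq_mul, Ideal.mul_top]

theorem IsHausdorff.eq_of_forall_sub_mem_pow [IsHausdorff I A] {x y : A}
    (h : ∀ n, x - y ∈ I ^ n) : x = y :=
  IsHausdorff.eq_iff_smodEq.mpr fun n => Ideal.sub_mem_pow_iff_smodEq.mp (h n)

theorem Polynomial.eval_sub_eval_sub_mul_derivative_eval_zero_mem {Q : A[X]} {u v : A} {n : ℕ}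
    (hu : u ∈ I) (hv : v ∈ I) (huv : u - v ∈ I ^ n) :
    Q.eval u - Q.eval v - (u - v) * Q.derivative.eval 0 ∈ I ^ (n + 1) := by
  obtain ⟨k, hk⟩ := Q.exists_mul_sq_add_linear_part_eq_eval_add v (u - v)
  rw [add_sub_cancel] at hk
  have hd : Q.derivative.eval v - Q.derivative.eval 0 ∈ I := by
    obtain ⟨c, hc⟩ := Polynomial.sub_dvd_eval_sub v 0 Q.derivative
    rw [hc, sub_zero]
    exact I.mul_mem_right _ hv
  have hsplit : Q.eval u - Q.eval v - (u - v) * Q.derivative.eval 0 =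
      (u - v) * (k * (u - v) + (Q.derivative.eval v - Q.derivative.eval 0)) := by
    rw [← hk]; ring
  rw [hsplit, pow_succ]
  exact Ideal.mul_mem_mul huv (add_mem (I.mul_mem_left _ (I.sub_mem hu hv)) hd)

namespace IsAdicComplete

theorem existsUnique_isFixedPt_mem [IsAdicComplete I A] {ψ : A → A}
    (hmaps : ∀ u ∈ I, ψ u ∈ I)
    (hψ : ∀ n, ∀ u ∈ I, ∀ v ∈ I, u - v ∈ I ^ n → ψ u - ψ v ∈ I ^ (n + 1)) :
    ∃! a, a ∈ I ∧ Function.IsFixedPt ψ a := by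
  set s : ℕ → A := fun n => ψ^[n] 0
  have hs_succ (n : ℕ) : s (n + 1) = ψ (s n) := Function.iterate_succ_apply' ψ n 0
  have hs_mem (n : ℕ) : s n ∈ I := by
    induction n with
    | zero => exact I.zero_mem
    | succ n ih => exact hs_succ n ▸ hmaps _ ih
  have hs_step (n : ℕ) : s (n + 1) - s n ∈ I ^ n := by
    induction n with
    | zero => simp
    | succ n ih =>
      have := hψ n _ (hs_mem _) _ (hs_mem _) ih
      rwa [← hs_succ, ← hs_succ] at this
  have hs_cauchy {m n : ℕ} (hmn : m ≤ n) : s m - s n ∈ I ^ m := by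
    induction n, hmn using Nat.le_induction with
    | base => simp
    | succ n hmn ih =>
      rw [← sub_add_sub_cancel _ (s n)]
      refine add_mem ih ?_
      rw [← neg_sub]
      exact neg_mem (Ideal.pow_le_pow_right hmn (hs_step n))
  obtain ⟨a, ha⟩ := IsPrecomplete.prec (I := I) inferInstance fun hmn =>
    Ideal.sub_mem_pow_iff_smodEq.mp (hs_cauchy hmn)
  replace ha (n : ℕ) : s n - a ∈ I ^ n := Ideal.sub_mem_pow_iff_smodEq.mpr (ha n)
  have ha_mem : a ∈ I := by
    have h1 : s 1 - a ∈ I := by simpa using ha 1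
    simpa using I.sub_mem (hs_mem 1) h1
  have ha_fix : ψ a = a := by
    refine IsHausdorff.eq_of_forall_sub_mem_pow (I := I) fun n => ?_
    rw [← sub_add_sub_cancel _ (s (n + 1)), hs_succ]
    have hψa : ψ a - ψ (s n) ∈ I ^ (n + 1) := by
      refine hψ n _ ha_mem _ (hs_mem n) ?_
      rw [← neg_sub]
      exact neg_mem (ha n)
    exact Ideal.pow_le_pow_right n.le_succ (add_mem hψa (hs_succ n ▸ ha (n + 1)))
  refine ⟨a, ⟨ha_mem, ha_fix⟩, fun b ⟨hb_mem, hb_fix⟩ =>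
    IsHausdorff.eq_of_forall_sub_mem_pow (I := I) fun n => ?_⟩
  induction n with
  | zero => simp
  | succ n ih => simpa [hb_fix.eq, ha_fix] using hψ n _ hb_mem _ ha_mem ih

theorem existsUnique_isRoot_mem [IsAdicComplete I A] {Q : A[X]} (h0 : Q.eval 0 ∈ I)
    (h1 : IsUnit (Q.derivative.eval 0)) : ∃! a, a ∈ I ∧ Q.IsRoot a := by
  obtain ⟨c, hc⟩ := h1.exists_left_inv
  have hfix (a : A) : Function.IsFixedPt (fun u => u - c * Q.eval u) a ↔ Q.IsRoot a := by
    rw [Function.IsFixedPt, sub_eq_self, (IsUnit.of_mul_eq_one _ hc).mul_right_eq_zero]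
    rfl
  simp_rw [← hfix]
  refine existsUnique_isFixedPt_mem (fun u hu => I.sub_mem hu (I.mul_mem_left _ ?_))
    fun n u hu v hv huv => ?_
  · obtain ⟨d, hd⟩ := Polynomial.sub_dvd_eval_sub u 0 Q
    rw [← sub_add_cancel (Q.eval u) (Q.eval 0), hd, sub_zero]
    exact add_mem (I.mul_mem_right _ hu) h0
  · have hψ : u - c * Q.eval u - (v - c * Q.eval v) =
        -c * (Q.eval u - Q.eval v - (u - v) * Q.derivative.eval 0) := by
      linear_combination (v - u) * hc
    rw [hψ]
    exact Ideal.mul_mem_left _ _ (Q.eval_sub_eval_sub_mul_derivative_eval_zero_mem hu hv huv)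

end IsAdicComplete

end AdicComplete

namespace Polynomial

theorem derivative_prod_C_add_C_mul_X_eval_zero {ι R : Type*} [CommSemiring R]
    [DecidableEq ι] (s : Finset ι) (a b : ι → R) :
    (∏ i ∈ s, (C (a i) + C (b i) * X)).derivative.eval 0 =
      ∑ i ∈ s, b i * ∏ j ∈ s.erase i, a j := by
  rw [derivative_prod_finset, eval_finsetSum]
  refine Finset.sum_congr rfl fun i _ => ?_
  simp only [eval_mul, eval_prod, derivative_add, derivative_C, derivative_C_mul_X, zero_add,
    eval_add, eval_C, eval_X, mul_zero, add_zero]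
  rw [mul_comm]

end Polynomial

namespace PowerSeries

variable {R : Type*} [CommRing R]

theorem existsUnique_eval_map_eq {L : R[X]} (hL : IsUnit (L.derivative.eval 0))
    {f : PowerSeries R} (hf : constantCoeff f = L.eval 0) :
    ∃! g : PowerSeries R, constantCoeff g = 0 ∧ (L.map C).eval g = f := by
  have := IsAdicComplete.existsUnique_isRoot_mem (I := Ideal.span {X})
    (Q := L.map C - Polynomial.C f) ?_ ?_
  · simpa [Ideal.mem_span_singleton, X_dvd_iff, sub_eq_zero] using this
  · simp [Ideal.mem_span_singleton, X_dvd_iff, hf]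
  · simpa [Polynomial.derivative_map] using hL.map C

theorem isCoprime_of_isCoprime_constantCoeff_s5 {p q : PowerSeries R}
    (h : IsCoprime (constantCoeff p) (constantCoeff q)) : IsCoprime p q := by
  obtain ⟨x, y, hxy⟩ := h
  have hu : IsUnit (C x * p + C y * q) := by
    simp [isUnit_iff_constantCoeff, hxy]
  obtain ⟨w, hw⟩ := hu.exists_left_inv
  exact ⟨w * C x, w * C y, by rw [mul_assoc, mul_assoc, ← mul_add, hw]⟩

end PowerSeries

theorem stmt_5 {R : Type*} [CommRing R] (f : PowerSeries R) (k : ℕ) (hk : 0 < k)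
    (a : Fin k → R) (hf0 : PowerSeries.constantCoeff f = ∏ i, a i)
    (hcop : ∀ i j, i ≠ j → IsCoprime (a i) (a j)) :
    ∃ b : Fin k → R, (∑ i, b i * ∏ j ∈ Finset.univ.erase i, a j) = 1 ∧
      ∃ g : PowerSeries R, PowerSeries.constantCoeff g = 0 ∧
        f = ∏ i, (PowerSeries.C (a i) + PowerSeries.C (b i) * g) ∧
        (∀ g' : PowerSeries R, PowerSeries.constantCoeff g' = 0 →
          f = ∏ i, (PowerSeries.C (a i) + PowerSeries.C (b i) * g') → g' = g) ∧
        (∀ i j, i ≠ j → IsCoprime (PowerSeries.C (a i) + PowerSeries.C (b i) * g)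
          (PowerSeries.C (a j) + PowerSeries.C (b j) * g)) := by
  have : Nonempty (Fin k) := ⟨⟨0, hk⟩⟩
  obtain ⟨b, hb⟩ := exists_sum_eq_one_iff_pairwise_coprime'.mpr fun i j hij => hcop i j hij
  simp only [Finset.compl_singleton] at hb
  set L : R[X] := ∏ i, (Polynomial.C (a i) + Polynomial.C (b i) * Polynomial.X)
  have hL : IsUnit (L.derivative.eval 0) := by
    rw [Polynomial.derivative_prod_C_add_C_mul_X_eval_zero, hb]
    exact isUnit_one
  have hLf : PowerSeries.constantCoeff f = L.eval 0 := by simp [L, hf0, Polynomial.eval_prod]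
  have hLg (u : PowerSeries R) :
      (L.map PowerSeries.C).eval u = ∏ i, (PowerSeries.C (a i) + PowerSeries.C (b i) * u) := by
    simp [L, Polynomial.map_prod, Polynomial.eval_prod]
  obtain ⟨g, ⟨hg0, hg⟩, hg_unique⟩ := PowerSeries.existsUnique_eval_map_eq hL hLf
  refine ⟨b, hb, g, hg0, hLg g ▸ hg.symm, fun g' hg'0 hfg' => hg_unique g' ⟨hg'0, ?_⟩,
    fun i j hij => PowerSeries.isCoprime_of_isCoprime_constantCoeff_s5 ?_⟩
  · rw [hLg, hfg']
  · simpa [hg0] using hcop i j hij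
end

section
/- Let R be a commutative ring, a ∈ R a nonzerodivisor. Then the a-adic completion of R is isomorphic as an R-algebra to R[[X]]/(a − X), and a is a nonzerodivisor in the a-adic completion of R. -/
/-!
Substituting `X ↦ a` into the truncation below degree `n` gives compatible algebra maps
`R⟦X⟧ → R ⧸ (aⁿ)`, hence a map `R⟦X⟧ → R̂` into the `a`-adic completion. It is surjective: a
compatible sequence `(rₙ)` with `rₙ₊₁ - rₙ = aⁿ cₙ` is the image of `r₀ + ∑ cₙ Xⁿ`. Its kernel
is `(a - X)`: if `f` maps to zero, then `aⁿ⁺¹` divides the partial sums `∑_{i ≤ n} fᵢ aⁱ`, and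
since `a` is regular the quotients `gₙ` satisfy `f = (a - X) ∑ gₙ Xⁿ`. Finally, if `a x = 0` in
`R̂`, a representative `y` of `xₙ₊₁` has `a y ∈ aⁿ⁺¹ R`, so `y ∈ aⁿ R` and `xₙ = 0`.
-/

open PowerSeries Polynomial

theorem Polynomial.mk_eval_eq_mk_eval_of_X_pow_dvd_sub {R : Type*} [CommRing R] (a : R)
    {n : ℕ} {p q : R[X]} (h : X ^ n ∣ p - q) :
    Ideal.Quotient.mk (Ideal.span {a} ^ n) (p.eval a) =
      Ideal.Quotient.mk (Ideal.span {a} ^ n) (q.eval a) := by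
  rw [Ideal.Quotient.eq, Ideal.span_singleton_pow, Ideal.mem_span_singleton, ← eval_sub]
  simpa using eval_dvd (x := a) h

namespace PowerSeries

variable {R : Type*} [CommRing R]

theorem X_pow_dvd_trunc_sub {m n : ℕ} (hmn : m ≤ n) {f : R⟦X⟧} {p : R[X]}
    (h : ∀ d < m, PowerSeries.coeff d f = p.coeff d) : Polynomial.X ^ m ∣ trunc n f - p :=
  Polynomial.X_pow_dvd_iff.2 fun d hd => by
    rw [Polynomial.coeff_sub, coeff_trunc, if_pos (hd.trans_le hmn), h d hd, sub_self]

theorem eval_trunc (a : R) (n : ℕ) (f : R⟦X⟧) :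
    (trunc n f).eval a = ∑ i ∈ Finset.range n, PowerSeries.coeff i f * a ^ i :=
  eval₂_trunc_eq_sum_range a (RingHom.id R) n f

theorem mk_eval_trunc_coe (a : R) (n : ℕ) (p : R[X]) :
    Ideal.Quotient.mk (Ideal.span {a} ^ n) ((trunc n (p : R⟦X⟧)).eval a) =
      Ideal.Quotient.mk (Ideal.span {a} ^ n) (p.eval a) :=
  mk_eval_eq_mk_eval_of_X_pow_dvd_sub a <|
    X_pow_dvd_trunc_sub le_rfl fun d _ => Polynomial.coeff_coe p d

theorem mk_eval_trunc_mul (a : R) (n : ℕ) (f g : R⟦X⟧) :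
    Ideal.Quotient.mk (Ideal.span {a} ^ n) ((trunc n (f * g)).eval a) =
      Ideal.Quotient.mk (Ideal.span {a} ^ n) ((trunc n f).eval a * (trunc n g).eval a) := by
  rw [← eval_mul]
  refine mk_eval_eq_mk_eval_of_X_pow_dvd_sub a <| X_pow_dvd_trunc_sub le_rfl fun d hd => ?_
  rw [coeff_mul_eq_coeff_trunc_mul_trunc f g hd, ← Polynomial.coe_mul, Polynomial.coeff_coe]

/-- The substitution `X ↦ a` modulo `aⁿ`: it only needs the coefficients below `n`, because
`X ↦ a` maps `Xⁿ` into `(aⁿ)`. -/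
noncomputable def evalModPow (a : R) (n : ℕ) : R⟦X⟧ →ₐ[R] R ⧸ Ideal.span {a} ^ n where
  toFun f := Ideal.Quotient.mk _ ((trunc n f).eval a)
  map_one' := by simpa using mk_eval_trunc_coe a n 1
  map_mul' f g := by simp only [mk_eval_trunc_mul, map_mul]
  map_zero' := by simp
  map_add' f g := by simp
  commutes' r := by simpa using mk_eval_trunc_coe a n (Polynomial.C r)

theorem evalModPow_apply (a : R) (n : ℕ) (f : R⟦X⟧) :
    evalModPow a n f = Ideal.Quotient.mk _ ((trunc n f).eval a) := rfl

theorem factorₐ_comp_evalModPow (a : R) {m n : ℕ} (hmn : m ≤ n) :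
    (Ideal.Quotient.factorₐ R (Ideal.pow_le_pow_right hmn)).comp (evalModPow a n) =
      evalModPow a m :=
  AlgHom.ext fun f => mk_eval_eq_mk_eval_of_X_pow_dvd_sub a <|
    X_pow_dvd_trunc_sub hmn fun d hd => by rw [coeff_trunc, if_pos hd]

noncomputable def evalAdicCompletion (a : R) : R⟦X⟧ →ₐ[R] AdicCompletion (Ideal.span {a}) R :=
  AdicCompletion.liftAlgHom _ (evalModPow a) (factorₐ_comp_evalModPow a)

theorem evalₐ_evalAdicCompletion (a : R) (n : ℕ) (f : R⟦X⟧) :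
    AdicCompletion.evalₐ _ n (evalAdicCompletion a f) =
      Ideal.Quotient.mk _ (∑ i ∈ Finset.range n, PowerSeries.coeff i f * a ^ i) := by
  rw [evalAdicCompletion, AdicCompletion.evalₐ_liftAlgHom, evalModPow_apply, eval_trunc]

theorem evalAdicCompletion_C_sub_X (a : R) : evalAdicCompletion a (C a - X) = 0 :=
  AdicCompletion.ext_evalₐ fun n => by
    have h := mk_eval_trunc_coe a n (Polynomial.C a - Polynomial.X)
    rw [Polynomial.coe_sub, Polynomial.coe_C, Polynomial.coe_X] at h
    rw [evalAdicCompletion, AdicCompletion.evalₐ_liftAlgHom, evalModPow_apply, h, map_zero]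
    simp

theorem evalAdicCompletion_surjective (a : R) : Function.Surjective (evalAdicCompletion a) := by
  intro x
  obtain ⟨r, rfl⟩ := AdicCompletion.mk_surjective _ R x
  have hr : ∀ n, ∃ c, r.val (n + 1) - r.val n = a ^ n * c := fun n => by
    have h := (r.property n.le_succ).symm
    rwa [SModEq.sub_mem, smul_eq_mul, Ideal.mul_top, Ideal.span_singleton_pow,
      Ideal.mem_span_singleton] at h
  choose c hc using hr
  refine ⟨PowerSeries.mk c + C (r.val 0), AdicCompletion.ext_evalₐ fun n => ?_⟩
  rw [map_add, ← algebraMap_eq, AlgHom.commutes, map_add, evalₐ_evalAdicCompletion,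
    AdicCompletion.algebraMap_apply, AdicCompletion.evalₐ_of, AdicCompletion.evalₐ_mk, ← map_add]
  congr 1
  have hsum : ∑ i ∈ Finset.range n, coeff i (PowerSeries.mk c) * a ^ i = r.val n - r.val 0 := by
    rw [← Finset.sum_range_sub]
    exact Finset.sum_congr rfl fun i _ => by rw [coeff_mk, mul_comm, hc]
  rw [hsum, Algebra.algebraMap_self, RingHom.id_apply, sub_add_cancel]

theorem C_sub_X_dvd_of_pow_dvd_sum {a : R} (ha : a ∈ nonZeroDivisors R) {f : R⟦X⟧}
    (h : ∀ n, a ^ n ∣ ∑ i ∈ Finset.range n, PowerSeries.coeff i f * a ^ i) :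
    C a - X ∣ f := by
  choose g hg using fun n => h (n + 1)
  refine ⟨PowerSeries.mk g, PowerSeries.ext fun k => ?_⟩
  rw [sub_mul, map_sub, coeff_C_mul, coeff_mk]
  rcases k with - | k
  · simpa using hg 0
  · rw [coeff_succ_X_mul, coeff_mk]
    have hk := hg (k + 1)
    rw [Finset.sum_range_succ, hg k] at hk
    have : a ^ (k + 1) * coeff (k + 1) f = a ^ (k + 1) * (a * g (k + 1) - g k) := by
      linear_combination hk
    exact (mul_cancel_left_mem_nonZeroDivisors (pow_mem ha _)).mp this

theorem ker_evalAdicCompletion {a : R} (ha : a ∈ nonZeroDivisors R) :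
    RingHom.ker (evalAdicCompletion a) = Ideal.span {C a - X} := by
  refine le_antisymm (fun f hf => ?_) ?_
  · refine Ideal.mem_span_singleton.2 (C_sub_X_dvd_of_pow_dvd_sum ha fun n => ?_)
    have h := congr(AdicCompletion.evalₐ _ n $((RingHom.mem_ker).1 hf))
    rwa [evalₐ_evalAdicCompletion, map_zero, Ideal.Quotient.eq_zero_iff_mem,
      Ideal.span_singleton_pow, Ideal.mem_span_singleton] at h
  · exact (Ideal.span_singleton_le_iff_mem _).2 (RingHom.mem_ker.2 (evalAdicCompletion_C_sub_X a))

end PowerSeries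

theorem AdicCompletion.isSMulRegular_of_isSMulRegular {R M : Type*} [CommRing R]
    [AddCommGroup M] [Module R M] {a : R} (ha : IsSMulRegular M a) :
    IsSMulRegular (AdicCompletion (Ideal.span {a}) M) a := by
  refine IsSMulRegular.of_right_eq_zero_of_smul fun x hx => AdicCompletion.ext fun n => ?_
  obtain ⟨y, hy⟩ := Submodule.Quotient.mk_surjective _ (x.val (n + 1))
  have hdiv : a • y ∈ (Ideal.span {a} ^ (n + 1) • ⊤ : Submodule R M) := by
    rw [← Submodule.Quotient.mk_eq_zero, Submodule.Quotient.mk_smul, hy, ← val_smul_apply, hx,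
      val_zero_apply]
  rw [Ideal.span_singleton_pow, Submodule.ideal_span_singleton_smul,
    Submodule.mem_smul_pointwise_iff_exists] at hdiv
  obtain ⟨m, -, hm⟩ := hdiv
  have hy' : y = a ^ n • m := ha <| by simp only [← hm, pow_succ', mul_smul]
  rw [← x.property n.le_succ, ← hy, hy', val_zero_apply, ← Submodule.mkQ_apply,
    Submodule.factor_mk, Submodule.mkQ_apply, Submodule.Quotient.mk_eq_zero]
  exact Submodule.smul_mem_smul (Ideal.pow_mem_pow (Ideal.mem_span_singleton_self a) n) trivial

theorem stmt_8 {R : Type*} [CommRing R] (a : R) (ha : a ∈ nonZeroDivisors R) :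
    Nonempty (AdicCompletion (Ideal.span {a}) R ≃ₐ[R]
      (PowerSeries R ⧸ Ideal.span {PowerSeries.C a - PowerSeries.X})) ∧
    algebraMap R (AdicCompletion (Ideal.span {a}) R) a ∈
      nonZeroDivisors (AdicCompletion (Ideal.span {a}) R) := by
  refine ⟨⟨(Ideal.quotientKerAlgEquivOfSurjective (evalAdicCompletion_surjective a)).symm.trans
    (Ideal.quotientEquivAlgOfEq R (ker_evalAdicCompletion ha))⟩, ?_⟩
  have hreg : IsSMulRegular R a :=
    isLeftRegular_iff.mp (isRegular_iff_mem_nonZeroDivisors.mpr ha).left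
  have hreg' := AdicCompletion.isSMulRegular_of_isSMulRegular hreg
  rw [← isSMulRegular_algebraMap_iff (AdicCompletion (Ideal.span {a}) R)] at hreg'
  exact isRegular_iff_mem_nonZeroDivisors.mp
    ((Commute.isRegular_iff (Commute.all _)).mpr (isLeftRegular_iff.mpr hreg'))
end

section
/- Let R be a commutative ring and f ∈ R[[X]] with f₀ a nonzerodivisor in R. Then the quotient ring S = R[[X]]/(f) is complete with respect to the ideal f₀S, i.e., the natural map S → lim S/(f₀ⁿS) is an isomorphism. -/
/-!
Write `a = f₀` and `S = R⟦X⟧ ⧸ (f)`. As `a ≡ a - f` modulo `f` and `a - f` has no constant term,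
the image of `a` lies in the image `J` of `(X)` in `S`. So it suffices that `S` is `J`-adically
complete, and that adic completeness for an ideal `I` passes to every principal ideal `(b) ⊆ I`:
past `n`, the tail of a `b`-adic Cauchy series `∑ bʲ tⱼ` is `bⁿ` times an `I`-adically convergent
series. `S` is `J`-adically precomplete as a quotient of the `X`-adically complete ring `R⟦X⟧`.
For separatedness, if `h = yₙ + f wₙ` with `yₙ ∈ (Xⁿ)` for all `n`, then `f (wₘ - wₙ) ∈ (Xᵐ)`
for `m ≤ n`; as `f₀` is a nonzerodivisor, multiplication by `f` is injective modulo `Xᵐ`, so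
`(wₙ)` converges to some `V`, and `h = f V`.
-/

open PowerSeries Finset

section AdicCompleteRing

variable {A : Type*} [CommRing A] {I : Ideal A}

theorem smodEq_pow_smul_top_iff {n : ℕ} {x y : A} :
    x ≡ y [SMOD (I ^ n • ⊤ : Submodule A A)] ↔ x - y ∈ I ^ n := by
  rw [smul_eq_mul, Ideal.mul_top, SModEq.sub_mem]

theorem isHausdorff_iff_forall_mem_pow :
    IsHausdorff I A ↔ ∀ x : A, (∀ n : ℕ, x ∈ I ^ n) → x = 0 := by
  simp only [isHausdorff_iff, SModEq.zero, smul_eq_mul, Ideal.mul_top]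

theorem isPrecomplete_iff_forall_sub_mem_pow :
    IsPrecomplete I A ↔ ∀ s : ℕ → A, (∀ {m n : ℕ}, m ≤ n → s m - s n ∈ I ^ m) →
      ∃ L : A, ∀ n, s n - L ∈ I ^ n := by
  simp only [isPrecomplete_iff, smodEq_pow_smul_top_iff]

theorem IsHausdorff.eq_zero_of_forall_mem_pow (I : Ideal A) [IsHausdorff I A] {x : A}
    (hx : ∀ n : ℕ, x ∈ I ^ n) : x = 0 :=
  isHausdorff_iff_forall_mem_pow.mp ‹_› x hx

theorem IsPrecomplete.exists_sub_mem_pow (I : Ideal A) [IsPrecomplete I A] {s : ℕ → A}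
    (hs : ∀ {m n : ℕ}, m ≤ n → s m - s n ∈ I ^ m) : ∃ L : A, ∀ n, s n - L ∈ I ^ n :=
  isPrecomplete_iff_forall_sub_mem_pow.mp ‹_› s hs

theorem sum_range_sub_sum_range_mem_pow {d : ℕ → A} (hd : ∀ j, d j ∈ I ^ j) {m n : ℕ}
    (hmn : m ≤ n) : ∑ j ∈ range n, d j - ∑ j ∈ range m, d j ∈ I ^ m := by
  rw [← sum_Ico_eq_sub _ hmn]
  exact Ideal.sum_mem _ fun j hj => Ideal.pow_le_pow_right (mem_Ico.mp hj).1 (hd j)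

theorem IsPrecomplete.exists_sum_range_sub_mem_pow [IsPrecomplete I A] {d : ℕ → A}
    (hd : ∀ j, d j ∈ I ^ j) : ∃ L : A, ∀ n, ∑ j ∈ range n, d j - L ∈ I ^ n :=
  IsPrecomplete.exists_sub_mem_pow I fun hmn => by
    simpa using neg_mem (sum_range_sub_sum_range_mem_pow hd hmn)

theorem IsPrecomplete.of_surjective {B : Type*} [CommRing B] [IsPrecomplete I A] (φ : A →+* B)
    (hφ : Function.Surjective φ) : IsPrecomplete (I.map φ) B := by
  refine isPrecomplete_iff_forall_sub_mem_pow.mpr fun s hs => ?_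
  have hlift : ∀ n, ∃ d ∈ I ^ n, φ d = s (n + 1) - s n := fun n => by
    rw [← Ideal.mem_map_iff_of_surjective φ hφ, Ideal.map_pow]
    simpa using neg_mem (hs n.le_succ)
  choose d hdI hd using hlift
  obtain ⟨t, ht⟩ := hφ (s 0)
  obtain ⟨L, hL⟩ := IsPrecomplete.exists_sum_range_sub_mem_pow hdI
  refine ⟨φ (t + L), fun n => ?_⟩
  have : s n - φ (t + L) = φ (∑ j ∈ range n, d j - L) := by
    simp only [map_sub, map_add, map_sum, hd, sum_range_sub (fun j => s j), ht]
    ring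
  rw [this, ← Ideal.map_pow]
  exact Ideal.mem_map_of_mem φ (hL n)

theorem isHausdorff_quotient_span_singleton [IsAdicComplete I A] {f : A}
    (hf : ∀ n x, f * x ∈ I ^ n → x ∈ I ^ n) :
    IsHausdorff (I.map (Ideal.Quotient.mk (Ideal.span {f}))) (A ⧸ Ideal.span {f}) := by
  refine isHausdorff_iff_forall_mem_pow.mpr fun x hx => ?_
  obtain ⟨h, rfl⟩ := Ideal.Quotient.mk_surjective x
  have hdecomp : ∀ n, ∃ y ∈ I ^ n, ∃ w, h = y + f * w := fun n => by
    have hxn := hx n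
    rw [← Ideal.map_pow, Ideal.mem_map_iff_of_surjective _ Ideal.Quotient.mk_surjective] at hxn
    obtain ⟨y, hy, hyh⟩ := hxn
    obtain ⟨w, hw⟩ := Ideal.mem_span_singleton'.mp (Ideal.Quotient.eq.mp hyh.symm)
    exact ⟨y, hy, w, by linear_combination -hw⟩
  choose y hy w hw using hdecomp
  have hcauchy : ∀ {m n : ℕ}, m ≤ n → w m - w n ∈ I ^ m := fun {m n} hmn =>
    hf m _ <| by
      rw [show f * (w m - w n) = y n - y m by linear_combination hw n - hw m]
      exact sub_mem (Ideal.pow_le_pow_right hmn (hy n)) (hy m)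
  obtain ⟨V, hV⟩ := IsPrecomplete.exists_sub_mem_pow I hcauchy
  have hhV : h - f * V = 0 := IsHausdorff.eq_zero_of_forall_mem_pow I fun n => by
    rw [show h - f * V = y n + f * (w n - V) by linear_combination hw n]
    exact add_mem (hy n) (Ideal.mul_mem_left _ _ (hV n))
  exact Ideal.Quotient.eq_zero_iff_mem.mpr
    (Ideal.mem_span_singleton'.mpr ⟨V, by linear_combination -hhV⟩)

theorem IsAdicComplete.span_singleton_of_mem [IsAdicComplete I A] {b : A} (hb : b ∈ I) :
    IsAdicComplete (Ideal.span {b}) A := by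
  have hle : ∀ n, Ideal.span {b} ^ n ≤ I ^ n := fun n =>
    Ideal.pow_right_mono ((Ideal.span_singleton_le_iff_mem I).mpr hb) n
  have : IsHausdorff (Ideal.span {b}) A := isHausdorff_iff_forall_mem_pow.mpr fun x hx =>
    IsHausdorff.eq_zero_of_forall_mem_pow I fun n => hle n (hx n)
  suffices IsPrecomplete (Ideal.span {b}) A from {}
  refine isPrecomplete_iff_forall_sub_mem_pow.mpr fun s hs => ?_
  have hstep : ∀ n, ∃ t, s (n + 1) - s n = b ^ n * t := fun n =>
    Ideal.mem_span_singleton.mp <| Ideal.span_singleton_pow b n ▸ by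
      simpa using neg_mem (hs n.le_succ)
  choose t ht using hstep
  obtain ⟨L, hL⟩ := IsPrecomplete.exists_sub_mem_pow I fun hmn => hle _ (hs hmn)
  refine ⟨L, fun n => ?_⟩
  obtain ⟨U, hU⟩ := IsPrecomplete.exists_sum_range_sub_mem_pow (I := I)
    (d := fun j => b ^ j * t (n + j)) fun j => Ideal.mul_mem_right _ _ (Ideal.pow_mem_pow hb j)
  have htail : s n - L = -(b ^ n * U) := by
    refine eq_neg_iff_add_eq_zero.mpr (IsHausdorff.eq_zero_of_forall_mem_pow I fun k => ?_)
    have htel : s (n + k) - s n = b ^ n * ∑ j ∈ range k, b ^ j * t (n + j) := by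
      have := sum_range_sub (fun j => s (n + j)) k
      simp only [add_zero, ← add_assoc, ht] at this
      rw [← this, mul_sum]
      exact sum_congr rfl fun j _ => by ring
    rw [show s n - L + b ^ n * U =
      (s (n + k) - L) - b ^ n * (∑ j ∈ range k, b ^ j * t (n + j) - U) by linear_combination -htel]
    exact sub_mem (Ideal.pow_le_pow_right (by omega) (hL _)) (Ideal.mul_mem_left _ _ (hU k))
  rw [htail, Ideal.span_singleton_pow]
  exact neg_mem (Ideal.mem_span_singleton'.mpr ⟨U, mul_comm _ _⟩)

end AdicCompleteRing

theorem PowerSeries.X_pow_dvd_of_X_pow_dvd_mul {R : Type*} [CommSemiring R] {f t : R⟦X⟧}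
    (hf : constantCoeff f ∈ nonZeroDivisors R) {n : ℕ} (h : X ^ n ∣ f * t) : X ^ n ∣ t := by
  rw [X_pow_dvd_iff] at h ⊢
  intro m hm
  induction m using Nat.strong_induction_on with
  | _ m ih =>
    have hcoeff := h m hm
    rw [coeff_mul, sum_eq_single (0, m) ?_ (by simp), coeff_zero_eq_constantCoeff] at hcoeff
    · exact mem_nonZeroDivisors_iff_right.mp hf _ (by rwa [mul_comm])
    · rintro ⟨i, j⟩ hij hne
      have hj : j < m := by
        rw [HasAntidiagonal.mem_antidiagonal] at hij
        by_contra! hjm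
        exact hne (Prod.ext (by simp only; omega) (by simp only; omega))
      rw [ih j hj (hj.trans hm), mul_zero]

theorem stmt_9 {R : Type*} [CommRing R] (f : PowerSeries R)
    (hf0 : PowerSeries.constantCoeff f ∈ nonZeroDivisors R) :
    IsAdicComplete
      (Ideal.span {Ideal.Quotient.mk (Ideal.span {f})
        (PowerSeries.C (PowerSeries.constantCoeff f))})
      (PowerSeries R ⧸ Ideal.span {f}) := by
  set π := Ideal.Quotient.mk (Ideal.span {f})
  have hf : ∀ n x, f * x ∈ Ideal.span {X} ^ n → x ∈ Ideal.span {X} ^ n := fun n x => by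
    simpa only [Ideal.span_singleton_pow, Ideal.mem_span_singleton] using
      X_pow_dvd_of_X_pow_dvd_mul hf0
  have : IsAdicComplete ((Ideal.span {X}).map π) (R⟦X⟧ ⧸ Ideal.span {f}) :=
    { toIsHausdorff := isHausdorff_quotient_span_singleton hf
      toIsPrecomplete := .of_surjective π Ideal.Quotient.mk_surjective }
  refine IsAdicComplete.span_singleton_of_mem (I := (Ideal.span {X}).map π) ?_
  have hπf : π (C (constantCoeff f)) = π (C (constantCoeff f) - f) := by
    rw [map_sub, Ideal.Quotient.eq_zero_iff_mem.mpr (Ideal.mem_span_singleton_self f), sub_zero]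
  rw [hπf]
  exact Ideal.mem_map_of_mem π (Ideal.mem_span_singleton.mpr (X_dvd_iff.mpr (by simp)))
end

section
/- Let R be a commutative ring, 𝔞 an ideal of R with ⋂ₙ 𝔞ⁿ = (0), and P an 𝔞-Weierstrass polynomial in R[X]. If F = hP with F ∈ R[X] a polynomial and h ∈ R[[X]] a power series, then h is a polynomial, i.e., h ∈ R[X]. -/
/-!
Divide `F` by the monic `P`: `F = P * (F /ₘ P) + F %ₘ P` with `deg (F %ₘ P) < deg P`. Then
`P * (h - F /ₘ P) = F %ₘ P`, and since `P` is `X ^ deg P` modulo `𝔞`, uniqueness of Weierstrass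
division over the `𝔞`-adically separated ring `R` forces `h = F /ₘ P`.
-/

open Polynomial
open scoped PowerSeries

theorem Ideal.isHausdorff_of_iInf_pow_eq_bot {R : Type*} [CommRing R] {I : Ideal R}
    (h : ⨅ n : ℕ, I ^ n = ⊥) : IsHausdorff I R :=
  ⟨fun x hx ↦ by
    rw [← Submodule.mem_bot R, ← h]
    exact Ideal.mem_iInf.mpr fun n ↦ by simpa [SModEq.zero] using hx n⟩

namespace Polynomial.IsDistinguishedAt

variable {R : Type*} [CommRing R] {I : Ideal R} {g : R[X]}

theorem natDegree_eq_order_map (hg : g.IsDistinguishedAt I) (hI : I ≠ ⊤) :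
    (g.natDegree : ℕ∞) = ((g : R⟦X⟧).map (Ideal.Quotient.mk I)).order :=
  hg.coe_natDegree_eq_order_map (g : R⟦X⟧) 1
    (by rwa [PowerSeries.constantCoeff_one, ← Ideal.ne_top_iff_one]) (mul_one _).symm

theorem coe_divByMonic_eq_of_coe_eq_mul [IsHausdorff I R] (hg : g.IsDistinguishedAt I)
    {f : R[X]} {h : R⟦X⟧} (hf : (f : R⟦X⟧) = h * g) : ((f /ₘ g : R[X]) : R⟦X⟧) = h := by
  nontriviality R
  have hI : I ≠ ⊤ := by
    rintro rfl
    exact not_subsingleton R ‹IsHausdorff ⊤ R›.subsingleton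
  have hdeg : (f %ₘ g).degree < ((g : R⟦X⟧).map (Ideal.Quotient.mk I)).order.toNat := by
    rw [← hg.natDegree_eq_order_map hI, ENat.toNat_natCast,
      ← degree_eq_natDegree hg.monic.ne_zero]
    exact degree_modByMonic_lt f hg.monic
  have hmul : (g : R⟦X⟧) * (h - (f /ₘ g : R[X])) = (f %ₘ g : R[X]) := by
    have hdiv := congrArg ((↑) : R[X] → R⟦X⟧) (modByMonic_add_div f g)
    push_cast at hdiv
    linear_combination -hf - hdiv
  exact (sub_eq_zero.mp ((hg.isWeierstrassDivisorAt hI).eq_zero_of_mul_eq hdeg hmul).1).symm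

end Polynomial.IsDistinguishedAt

theorem stmt_10 {R : Type*} [CommRing R] (𝔞 : Ideal R) (hHaus : (⨅ n : ℕ, 𝔞 ^ n) = ⊥)
    (P : Polynomial R) (hP : P.Monic) (hPW : ∀ i < P.natDegree, P.coeff i ∈ 𝔞)
    (F : Polynomial R) (h : PowerSeries R)
    (hFh : (F : PowerSeries R) = h * (P : PowerSeries R)) :
    ∃ H : Polynomial R, (H : PowerSeries R) = h := by
  have := Ideal.isHausdorff_of_iInf_pow_eq_bot hHaus
  have hPd : P.IsDistinguishedAt 𝔞 := ⟨⟨fun hi ↦ hPW _ hi⟩, hP⟩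
  exact ⟨F /ₘ P, hPd.coe_divByMonic_eq_of_coe_eq_mul hFh⟩
end

section
/- Let R be a commutative ring, 𝔞 an ideal of R such that R is complete with respect to some 𝔞-filtration, and P an 𝔞-Weierstrass polynomial in R[X]. Then the natural R[X]-algebra homomorphism R[X]/(P) → R[[X]]/(P) is an isomorphism. -/
/-!
Mathlib's Weierstrass division by a power series `g` whose coefficients below degree `n` lie in
`𝔞` and whose `n`-th coefficient is a unit builds quotients `qₖ` whose successive differences
have coefficients in `𝔞ᵏ` while `f - g qₖ` has coefficients of degree `≥ n` in `𝔞ᵏ`. Each `𝔣ᵢ`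
contains a power of `𝔞`, so these sequences are Cauchy for `𝔣` and converge to some `q`, and
`f - g q` is then a polynomial of degree `< n`. Uniqueness of the division only needs `R` to be
`𝔞`-adically Hausdorff, which follows from `⋂ 𝔣ᵢ = 0`: applied to `P (c - x /ₘ P) = x %ₘ P` it
shows that a polynomial divisible by `P` in `R⟦X⟧` is divisible by `P` in `R[X]`.
-/

open PowerSeries Polynomial

section FiltrationComplete

variable {R : Type*} [CommRing R] {𝔞 : Ideal R} {𝔣 : ℕ → Ideal R}

theorem isHausdorff_of_pow_le_of_iInf_eq_bot (hfa : ∀ i, ∃ m : ℕ, 𝔞 ^ m ≤ 𝔣 i)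
    (hHaus : (⨅ i, 𝔣 i) = ⊥) : IsHausdorff 𝔞 R := by
  refine ⟨fun x hx ↦ ?_⟩
  have hx : ∀ m, x ∈ 𝔞 ^ m := fun m ↦ by
    simpa [SModEq.zero, smul_eq_mul, Ideal.mul_top] using hx m
  rw [← Ideal.mem_bot, ← hHaus, Submodule.mem_iInf]
  intro i
  obtain ⟨m, hm⟩ := hfa i
  exact hm (hx m)

theorem exists_monotone_pow_le (hfa : ∀ i, ∃ m : ℕ, 𝔞 ^ m ≤ 𝔣 i) :
    ∃ M : ℕ → ℕ, Monotone M ∧ ∀ i, 𝔞 ^ M i ≤ 𝔣 i := by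
  choose m hm using hfa
  refine ⟨fun i ↦ (Finset.range (i + 1)).sup m, fun i j hij ↦ ?_, fun i ↦ ?_⟩
  · exact Finset.sup_mono (Finset.range_subset_range.mpr (by omega))
  · exact (Ideal.pow_le_pow_right (Finset.le_sup (Finset.self_mem_range_succ i))).trans (hm i)

theorem sub_mem_pow_of_succ_sub_mem_pow {x : ℕ → R} (hx : ∀ k, x (k + 1) - x k ∈ 𝔞 ^ k)
    {k l : ℕ} (hkl : k ≤ l) : x l - x k ∈ 𝔞 ^ k := by
  induction l, hkl using Nat.le_induction with
  | base => simp
  | succ l hkl ih =>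
    simpa using add_mem (Ideal.pow_le_pow_right hkl (hx l)) ih

theorem exists_sub_mem_of_succ_sub_mem_pow {M : ℕ → ℕ} (hM : Monotone M)
    (hMf : ∀ i, 𝔞 ^ M i ≤ 𝔣 i)
    (hcomplete : ∀ a : ℕ → R, (∀ i j, i ≤ j → a j - a i ∈ 𝔣 i) →
      ∃ b : R, ∀ i, b - a i ∈ 𝔣 i)
    {x : ℕ → R} (hx : ∀ k, x (k + 1) - x k ∈ 𝔞 ^ k) :
    ∃ b : R, ∀ i, b - x (M i) ∈ 𝔣 i :=
  hcomplete (x ∘ M) fun i _ hij ↦ hMf i (sub_mem_pow_of_succ_sub_mem_pow hx (hM hij))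

end FiltrationComplete

namespace PowerSeries.IsWeierstrassDivisorAt

variable {R : Type*} [CommRing R] {𝔞 : Ideal R} {𝔣 : ℕ → Ideal R} {g : R⟦X⟧}

theorem exists_eq_mul_add (H : g.IsWeierstrassDivisorAt 𝔞)
    (hfa : ∀ i, ∃ m : ℕ, 𝔞 ^ m ≤ 𝔣 i) (hHaus : (⨅ i, 𝔣 i) = ⊥)
    (hcomplete : ∀ a : ℕ → R, (∀ i j, i ≤ j → a j - a i ∈ 𝔣 i) →
      ∃ b : R, ∀ i, b - a i ∈ 𝔣 i)
    (f : R⟦X⟧) : ∃ (q : R⟦X⟧) (r : R[X]), f = g * q + r := by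
  set n := (g.map (Ideal.Quotient.mk 𝔞)).order.toNat
  obtain ⟨M, hM, hMf⟩ := exists_monotone_pow_le hfa
  choose b hb using fun i ↦ exists_sub_mem_of_succ_sub_mem_pow hM hMf hcomplete
    (x := fun k ↦ coeff i (H.seq f k)) fun k ↦ by
      simpa only [map_sub] using H.coeff_seq_succ_sub_seq_mem f k i
  set q := PowerSeries.mk b
  have hvanish : ∀ i, n ≤ i → coeff i (f - g * q) = 0 := fun i hi ↦ by
    rw [← Ideal.mem_bot, ← hHaus, Submodule.mem_iInf]
    intro m
    rw [show f - g * q = f - g * H.seq f (M m) - g * (q - H.seq f (M m)) by ring, map_sub]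
    refine sub_mem (hMf m (H.coeff_seq_mem f (M m) hi)) ?_
    refine coeff_mul_mem_ideal_of_coeff_right_mem_ideal' (fun j ↦ ?_) i
    simpa [q] using hb j m
  refine ⟨q, trunc n (f - g * q), ?_⟩
  rw [← sub_eq_iff_eq_add']
  ext i
  rw [Polynomial.coeff_coe, coeff_trunc]
  split_ifs with hi
  · rfl
  · exact hvanish i (not_lt.mp hi)

end PowerSeries.IsWeierstrassDivisorAt

namespace Polynomial.IsDistinguishedAt

variable {R : Type*} [CommRing R] {I : Ideal R} {P : R[X]}

theorem natDegree_eq_toNat_order_map [IsHausdorff I R] (H : P.IsDistinguishedAt I) :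
    P.natDegree = ((P : R⟦X⟧).map (Ideal.Quotient.mk I)).order.toNat := by
  rcases eq_or_ne I ⊤ with rfl | hI
  · have := ‹IsHausdorff ⊤ R›.subsingleton
    simp [Subsingleton.elim P 0]
  have h := H.coe_natDegree_eq_order_map P 1
    (by rwa [constantCoeff_one, ← Ideal.ne_top_iff_one]) (mul_one _).symm
  rw [← h, ENat.toNat_natCast]

theorem dvd_of_coe_dvd [IsHausdorff I R] (H : P.IsDistinguishedAt I) {x : R[X]}
    (hx : (P : R⟦X⟧) ∣ x) : P ∣ x := by
  obtain ⟨c, hc⟩ := hx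
  have hmod : (P : R⟦X⟧) * (c - (x /ₘ P : R[X])) = (x %ₘ P : R[X]) := by
    rw [modByMonic_eq_sub_mul_div x P]
    push_cast
    rw [hc]
    ring
  rw [← modByMonic_eq_zero_iff_dvd H.monic]
  refine (H.isWeierstrassDivisorAt'.eq_zero_of_mul_eq ?_ hmod).2
  nontriviality R
  rw [← H.natDegree_eq_toNat_order_map, ← degree_eq_natDegree H.monic.ne_zero]
  exact degree_modByMonic_lt x H.monic

end Polynomial.IsDistinguishedAt

theorem stmt_11_general {R : Type*} [CommRing R] (𝔞 : Ideal R) (𝔣 : ℕ → Ideal R)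
    (hfa : ∀ i, ∃ m : ℕ, 𝔞 ^ m ≤ 𝔣 i)
    (hHaus : (⨅ i, 𝔣 i) = ⊥)
    (hcomplete : ∀ a : ℕ → R, (∀ i j, i ≤ j → a j - a i ∈ 𝔣 i) →
      ∃ b : R, ∀ i, b - a i ∈ 𝔣 i)
    (P : Polynomial R) (hP : P.Monic) (hPW : ∀ i < P.natDegree, P.coeff i ∈ 𝔞) :
    Function.Surjective
      ((Ideal.Quotient.mk (Ideal.span {(P : PowerSeries R)})).comp
        (Polynomial.coeToPowerSeries.ringHom)) ∧
    RingHom.ker ((Ideal.Quotient.mk (Ideal.span {(P : PowerSeries R)})).comp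
        (Polynomial.coeToPowerSeries.ringHom)) = Ideal.span {P} := by
  have hP𝔞 : P.IsDistinguishedAt 𝔞 := ⟨⟨hPW _⟩, hP⟩
  have := isHausdorff_of_pow_le_of_iInf_eq_bot hfa hHaus
  refine ⟨fun y ↦ ?_, ?_⟩
  · obtain ⟨f, rfl⟩ := Ideal.Quotient.mk_surjective y
    obtain ⟨q, r, rfl⟩ := hP𝔞.isWeierstrassDivisorAt'.exists_eq_mul_add hfa hHaus hcomplete f
    refine ⟨r, Ideal.Quotient.eq.mpr (Ideal.mem_span_singleton'.mpr ⟨-q, ?_⟩)⟩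
    simp only [coeToPowerSeries.ringHom_apply]
    ring
  · ext x
    simp only [RingHom.mem_ker, RingHom.comp_apply, Ideal.Quotient.eq_zero_iff_mem,
      Ideal.mem_span_singleton, coeToPowerSeries.ringHom_apply]
    exact ⟨hP𝔞.dvd_of_coe_dvd, fun h ↦ map_dvd coeToPowerSeries.ringHom h⟩

theorem stmt_11 {R : Type*} [CommRing R] (𝔞 : Ideal R) (𝔣 : ℕ → Ideal R)
    (hdesc : ∀ i, 𝔣 (i + 1) ≤ 𝔣 i)
    (hfa : ∀ i, ∃ m : ℕ, 𝔞 ^ m ≤ 𝔣 i)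
    (hHaus : (⨅ i, 𝔣 i) = ⊥)
    (hcomplete : ∀ a : ℕ → R, (∀ i j, i ≤ j → a j - a i ∈ 𝔣 i) →
      ∃ b : R, ∀ i, b - a i ∈ 𝔣 i)
    (P : Polynomial R) (hP : P.Monic) (hPW : ∀ i < P.natDegree, P.coeff i ∈ 𝔞) :
    Function.Surjective
      ((Ideal.Quotient.mk (Ideal.span {(P : PowerSeries R)})).comp
        (Polynomial.coeToPowerSeries.ringHom)) ∧
    RingHom.ker ((Ideal.Quotient.mk (Ideal.span {(P : PowerSeries R)})).comp
        (Polynomial.coeToPowerSeries.ringHom)) = Ideal.span {P} :=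
  stmt_11_general 𝔞 𝔣 hfa hHaus hcomplete P hP hPW
end

section
/- Let R be a PID and f ∈ R[[X]] with f₀ ≠ 0. If f₀ is associate to πᵏ for some prime π of R and f = π·f′ with f′ ∈ R[[X]], π ∤ f′, k = 1, and f′₀ a unit in R, then f is irreducible in R[[X]]. -/
namespace PowerSeries

variable {R : Type*} [CommRing R]

instance isLocalHom_constantCoeff : IsLocalHom (constantCoeff : R⟦X⟧ →+* R) :=
  ⟨fun _ => isUnit_iff_constantCoeff.mpr⟩

theorem irreducible_of_irreducible_constantCoeff {φ : R⟦X⟧}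
    (h : Irreducible (constantCoeff φ)) : Irreducible φ :=
  h.of_map

end PowerSeries

theorem stmt_18_general {R : Type*} [CommRing R] [IsDomain R]
    (f : PowerSeries R) (π : R) (hπ : Prime π)
    (hassoc : Associated (π ^ 1) (PowerSeries.constantCoeff f)) :
    Irreducible f := by
  rw [pow_one] at hassoc
  exact PowerSeries.irreducible_of_irreducible_constantCoeff (hassoc.irreducible hπ.irreducible)

theorem stmt_18 {R : Type*} [CommRing R] [IsDomain R] [IsPrincipalIdealRing R]
    (f f' : PowerSeries R) (π : R) (hπ : Prime π)
    (hf0 : PowerSeries.constantCoeff f ≠ 0)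
    (hassoc : Associated (π ^ 1) (PowerSeries.constantCoeff f))
    (hff' : f = PowerSeries.C π * f')
    (hndvd : ¬(PowerSeries.C π ∣ f'))
    (hunit : IsUnit (PowerSeries.constantCoeff f')) :
    Irreducible f :=
  stmt_18_general f π hπ hassoc
end

section
/- Let R be an integral domain, 𝔭 a prime ideal of R such that the 𝔭-adic completion R̂ of R is an integral domain containing R, and let f ∈ R[[X]] be a power series whose image in R̂[[X]] is 𝔭̂-distinguished, where 𝔭̂ = 𝔭R̂. If every nonunit divisor of f₀ in R is a nonunit in R̂, and the Weierstrass polynomial P_f associated to f in R̂[X] is irreducible in R̂[X], then f is irreducible in R[[X]]. -/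
/-!
Write `R̂` for the `𝔭`-adic completion and suppose `f = a * b`. Modulo the prime `𝔭` the
lowest coefficient of `f` that is not in `𝔭` sits in degree `n` and is a unit, so the same holds
for `a` and `b` (in degrees `j + k = n`), because `(R ⧸ 𝔭)⟦X⟧` is a domain. Over each
`R ⧸ 𝔭 ^ m` the image of `𝔭` is nilpotent, so there `a` and `b` have Weierstrass factorizations;
by uniqueness they are compatible in `m` and glue to polynomials `P_a, P_b` over `R̂`, and
uniqueness once more gives `P_f = P_a * P_b`. As `P_f` is irreducible, one factor, say `P_a`, is
a unit. Then `a` is a unit modulo every `𝔭 ^ m`, so its constant coefficient is a unit in `R̂`;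
it divides `f₀`, so by hypothesis it is already a unit in `R`, and `a` is a unit.
-/

open PowerSeries
open scoped Polynomial

theorem IsAdicComplete.of_isNilpotent {R M : Type*} [CommRing R] [AddCommGroup M] [Module R M]
    {I : Ideal R} (hI : IsNilpotent I) : IsAdicComplete I M := by
  obtain ⟨m, hm⟩ := hI
  have hbot : ∀ n, m ≤ n → (I ^ n • ⊤ : Submodule R M) = ⊥ := fun n hn => by
    rw [le_bot_iff.mp ((Ideal.pow_le_pow_right hn).trans hm.le), Submodule.bot_smul]
  refine { haus' := fun x hx => ?_, prec' := fun f hf => ⟨f m, fun n => ?_⟩ }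
  · simpa [hbot m le_rfl] using hx m
  · rcases le_total n m with hnm | hmn
    · exact hf hnm
    · have := hf hmn
      rw [hbot m le_rfl, SModEq.bot] at this
      rw [this]

namespace PowerSeries

variable {A B : Type*} [CommRing A] [CommRing B] {I : Ideal A}

theorem exists_isUnit_coeff_of_mul [IsDomain A] {φ ψ : A⟦X⟧} {n : ℕ}
    (hlow : ∀ i < n, coeff i (φ * ψ) = 0) (hn : IsUnit (coeff n (φ * ψ))) :
    ∃ j, (∀ i < j, coeff i φ = 0) ∧ IsUnit (coeff j φ) := by
  have hφψ : φ * ψ ≠ 0 := fun h => hn.ne_zero (by rw [h, map_zero])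
  have hord : φ.order.toNat + ψ.order.toNat = n := by
    have h := order_eq_nat.mpr ⟨hn.ne_zero, hlow⟩
    rw [order_mul, ← ENat.natCast_toNat (order_eq_top.not.mpr (left_ne_zero_of_mul hφψ)),
      ← ENat.natCast_toNat (order_eq_top.not.mpr (right_ne_zero_of_mul hφψ))] at h
    exact_mod_cast h
  refine ⟨φ.order.toNat, fun i hi => coeff_of_lt_order_toNat i hi, ?_⟩
  have hprod : φ * ψ = X ^ n * (divXPowOrder φ * divXPowOrder ψ) := by
    rw [← hord, pow_add, mul_mul_mul_comm, X_pow_order_mul_divXPowOrder,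
      X_pow_order_mul_divXPowOrder]
  rw [hprod, coeff_X_pow_mul', if_pos le_rfl, Nat.sub_self, coeff_zero_eq_constantCoeff,
    map_mul] at hn
  rw [← constantCoeff_divXPowOrder]
  exact isUnit_of_mul_isUnit_left hn

theorem isUnit_of_X_pow_eq_mul_add (hI : I ≤ (⊥ : Ideal A).jacobson) {g q : A⟦X⟧} {r : A[X]}
    {j : ℕ} (hlow : ∀ i < j, coeff i g ∈ I) (hr : r.degree < j)
    (heq : X ^ j = g * q + (r : A⟦X⟧)) : IsUnit q := by
  rw [isUnit_iff_constantCoeff]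
  refine (isLocalHom_of_le_jacobson_bot I hI).map_nonunit _ ?_
  -- modulo `I`, `g = X ^ j * d`, so the `X ^ j`-coefficient of `heq` reads `1 = d₀ * q₀`
  obtain ⟨d, hd⟩ : X ^ j ∣ g.map (Ideal.Quotient.mk I) := X_pow_dvd_iff.mpr fun i hi => by
    rw [coeff_map, Ideal.Quotient.eq_zero_iff_mem]
    exact hlow i hi
  have := congrArg (fun F => coeff j (F.map (Ideal.Quotient.mk I))) heq
  simp only [map_add, map_mul, hd, map_pow, map_X, coeff_X_pow_self, mul_assoc,
    coeff_X_pow_mul', if_pos le_rfl, Nat.sub_self, coeff_zero_eq_constantCoeff,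
    ← Polynomial.polynomial_map_coe, Polynomial.coeff_coe, Polynomial.coeff_map,
    Polynomial.coeff_eq_zero_of_degree_lt hr, map_zero, add_zero] at this
  exact IsUnit.of_mul_eq_one_right _ this.symm

theorem exists_isWeierstrassFactorizationAt [IsAdicComplete I A] {g : A⟦X⟧} {j : ℕ}
    (hlow : ∀ i < j, coeff i g ∈ I) (hunit : IsUnit (coeff j g)) :
    ∃ f h, g.IsWeierstrassFactorizationAt f h I ∧ f.natDegree ≤ j := by
  rcases eq_or_ne I ⊤ with rfl | hI
  · have := IsAdicComplete.subsingleton (M := A) ‹_›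
    exact ⟨1, g, ⟨⟨⟨fun hi => by simp at hi⟩, Polynomial.monic_one⟩, isUnit_of_subsingleton _,
      Subsingleton.elim _ _⟩, by simp⟩
  have := Ideal.Quotient.nontrivial_iff.mpr hI
  have := (Ideal.Quotient.mk I).domain_nontrivial
  have hord : (g.map (Ideal.Quotient.mk I)).order.toNat = j := by
    refine (congrArg ENat.toNat (order_eq_nat.mpr ⟨?_, fun i hi => ?_⟩)).trans
      (ENat.toNat_natCast j)
    · rw [coeff_map]
      exact (hunit.map _).ne_zero
    · rw [coeff_map, Ideal.Quotient.eq_zero_iff_mem]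
      exact hlow i hi
  have H : g.IsWeierstrassDivisorAt I := by rwa [IsWeierstrassDivisorAt, hord]
  have D := H.isWeierstrassDivisionAt_div_mod (X ^ j)
  set r := H.mod (X ^ j)
  have hr : r.degree < j := hord ▸ D.degree_lt
  obtain ⟨u, hu⟩ :=
    isUnit_of_X_pow_eq_mul_add (IsAdicComplete.le_jacobson_bot I) hlow hr D.eq_mul_add
  have hdeg : (Polynomial.X ^ j - r).natDegree = j := by
    refine Polynomial.natDegree_eq_of_degree_eq_some ?_
    rw [Polynomial.degree_sub_eq_left_of_degree_lt (by rwa [Polynomial.degree_X_pow]),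
      Polynomial.degree_X_pow]
  refine ⟨Polynomial.X ^ j - r, ↑u⁻¹, ⟨⟨⟨fun hi => ?_⟩, ?_⟩, Units.isUnit _, ?_⟩, hdeg.le⟩
  · rw [← Polynomial.coeff_coe, Polynomial.coe_sub, Polynomial.coe_pow, Polynomial.coe_X]
    exact D.coeff_f_sub_r_mem (hord ▸ hdeg ▸ hi)
  · exact (Polynomial.monic_X_pow j).sub_of_left (by rwa [Polynomial.degree_X_pow])
  · rw [Polynomial.coe_sub, Polynomial.coe_pow, Polynomial.coe_X, D.eq_mul_add,
      add_sub_cancel_right, ← hu, mul_assoc, Units.mul_inv, mul_one]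

namespace IsWeierstrassFactorizationAt

variable {g h h' : A⟦X⟧} {f f' : A[X]}

theorem map (H : g.IsWeierstrassFactorizationAt f h I) (φ : A →+* B) :
    (g.map φ).IsWeierstrassFactorizationAt (f.map φ) (h.map φ) (I.map φ) :=
  ⟨⟨H.isDistinguishedAt.toIsWeaklyEisensteinAt.map φ, H.isDistinguishedAt.monic.map φ⟩,
    H.isUnit.map _, by rw [H.eq_mul, map_mul, Polynomial.polynomial_map_coe]⟩

theorem elim [IsHausdorff I A] (H : g.IsWeierstrassFactorizationAt f h I)
    (H' : g.IsWeierstrassFactorizationAt f' h' I) : f = f' ∧ h = h' := by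
  rcases eq_or_ne I ⊤ with rfl | hI
  · have := IsHausdorff.subsingleton ‹IsHausdorff ⊤ A›
    exact ⟨Subsingleton.elim _ _, Subsingleton.elim _ _⟩
  have := Ideal.Quotient.nontrivial_iff.mpr hI
  have := (Ideal.Quotient.mk I).domain_nontrivial
  have hf' : f'.natDegree = ((f' : A⟦X⟧).map (Ideal.Quotient.mk I)).order.toNat :=
    natDegree_eq_toNat_order_map_of_ne_top
      ⟨H'.isDistinguishedAt, isUnit_one, (mul_one _).symm⟩ hI
  have hdeg : f.natDegree = f'.natDegree :=
    (H.natDegree_eq_toNat_order_map_of_ne_top hI).trans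
      (H'.natDegree_eq_toNat_order_map_of_ne_top hI).symm
  have hmonic : f.Monic := H.isDistinguishedAt.monic
  have hmonic' : f'.Monic := H'.isDistinguishedAt.monic
  have hlt : (f - f').degree < ((f' : A⟦X⟧).map (Ideal.Quotient.mk I)).order.toNat := by
    rw [← hf', ← hdeg, ← Polynomial.degree_eq_natDegree hmonic.ne_zero]
    refine Polynomial.degree_sub_lt_left ?_ hmonic.ne_zero
      (by rw [hmonic.leadingCoeff, hmonic'.leadingCoeff])
    rw [Polynomial.degree_eq_natDegree hmonic.ne_zero,
      Polynomial.degree_eq_natDegree hmonic'.ne_zero, hdeg]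
  obtain ⟨u, hu⟩ := H.isUnit
  have hf : (f : A⟦X⟧) = g * ↑u⁻¹ := by rw [H.eq_mul, ← hu, mul_assoc, Units.mul_inv, mul_one]
  have heq : (f' : A⟦X⟧) * (h' * ↑u⁻¹ - 1) = ↑(f - f') := by
    rw [Polynomial.coe_sub, hf, H'.eq_mul]
    ring
  obtain ⟨hq, hr⟩ := (H'.isDistinguishedAt.isWeierstrassDivisorAt hI).eq_zero_of_mul_eq hlt heq
  rw [sub_eq_zero, Units.mul_inv_eq_one, hu] at hq
  exact ⟨sub_eq_zero.mp hr, hq.symm⟩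

end IsWeierstrassFactorizationAt

end PowerSeries

namespace AdicCompletion

variable {R : Type*} [CommRing R] {I : Ideal R}

theorem factorPow_evalₐ {m n : ℕ} (hmn : m ≤ n) (x : AdicCompletion I R) :
    Ideal.Quotient.factorPow I hmn (evalₐ I n x) = evalₐ I m x := by
  obtain ⟨s, rfl⟩ := mk_surjective I R x
  rw [evalₐ_mk, evalₐ_mk, Ideal.Quotient.factorPow, Ideal.Quotient.factor_mk,
    Ideal.Quotient.mk_eq_mk_iff_sub_mem, ← neg_sub]
  have := s.property hmn
  rw [SModEq.sub_mem, smul_eq_mul, Ideal.mul_top] at this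
  exact neg_mem this

theorem exists_evalₐ_eq (c : ∀ n, R ⧸ I ^ n)
    (hc : ∀ n, Ideal.Quotient.factorPow I n.le_succ (c (n + 1)) = c n) :
    ∃ x : AdicCompletion I R, ∀ n, evalₐ I n x = c n := by
  choose r hr using fun n => Ideal.Quotient.mk_surjective (c n)
  refine ⟨mk I R (AdicCauchySequence.mk I R r fun n => ?_), fun n => by simpa using hr n⟩
  rw [SModEq.sub_mem, smul_eq_mul, Ideal.mul_top, ← Ideal.Quotient.mk_eq_mk_iff_sub_mem, hr,
    ← hc n, ← hr (n + 1), Ideal.Quotient.factorPow, Ideal.Quotient.factor_mk]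

theorem exists_polynomial_map_evalₐ_eq (p : ∀ n, (R ⧸ I ^ n)[X])
    (hp : ∀ n, (p (n + 1)).map (Ideal.Quotient.factorPow I n.le_succ) = p n) {d : ℕ}
    (hd : ∀ n, (p n).natDegree ≤ d) :
    ∃ P : (AdicCompletion I R)[X], ∀ n, P.map (evalₐ I n).toRingHom = p n := by
  choose x hx using fun i => exists_evalₐ_eq (fun n => (p n).coeff i)
    (fun n => by rw [← hp n, Polynomial.coeff_map])
  refine ⟨∑ i ∈ Finset.range (d + 1), Polynomial.monomial i (x i), fun n => ?_⟩
  rw [(p n).as_sum_range' (d + 1) (Nat.lt_succ_of_le (hd n)), Polynomial.map_sum]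
  simp [hx]

theorem polynomial_ext_evalₐ {P Q : (AdicCompletion I R)[X]}
    (h : ∀ n, P.map (evalₐ I n).toRingHom = Q.map (evalₐ I n).toRingHom) : P = Q :=
  Polynomial.ext fun i => ext_evalₐ fun n => by
    simpa using congrArg (Polynomial.coeff · i) (h n)

theorem isUnit_of_forall_isUnit_evalₐ {x : AdicCompletion I R}
    (hx : ∀ n, IsUnit (evalₐ I n x)) : IsUnit x := by
  obtain ⟨y, hy⟩ := exists_evalₐ_eq (fun n => (↑(hx n).unit⁻¹ : R ⧸ I ^ n)) fun n => by
    refine (Units.inv_eq_of_mul_eq_one_left ?_).symm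
    rw [IsUnit.unit_spec, ← factorPow_evalₐ n.le_succ, ← map_mul, IsUnit.val_inv_mul, map_one]
  refine IsUnit.of_mul_eq_one y (ext_evalₐ fun n => ?_)
  rw [map_mul, hy, IsUnit.mul_val_inv, map_one]

variable (I) in
theorem evalₐ_comp_algebraMap (n : ℕ) :
    (evalₐ I n).toRingHom.comp (algebraMap R (AdicCompletion I R)) = Ideal.Quotient.mk (I ^ n) :=
  (evalₐ I n).comp_algebraMap.trans (Ideal.Quotient.algebraMap_eq _)

theorem map_algebraMap_le_ker_evalOneₐ :
    I.map (algebraMap R (AdicCompletion I R)) ≤ RingHom.ker (evalOneₐ I).toRingHom := by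
  rw [Ideal.map_le_iff_le_comap, RingHom.comap_ker, evalOneₐ_comp_algebraMap_eq_mk, Ideal.mk_ker]

theorem mem_of_algebraMap_mem_map {r : R}
    (hr : algebraMap R (AdicCompletion I R) r ∈ I.map (algebraMap R (AdicCompletion I R))) :
    r ∈ I := by
  have := map_algebraMap_le_ker_evalOneₐ hr
  rwa [RingHom.mem_ker, ← RingHom.comp_apply, evalOneₐ_comp_algebraMap_eq_mk,
    Ideal.Quotient.eq_zero_iff_mem] at this

theorem isUnit_mk_of_isUnit_mk_algebraMap {r : R}
    (hr : IsUnit (Ideal.Quotient.mk (I.map (algebraMap R (AdicCompletion I R)))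
      (algebraMap R (AdicCompletion I R) r))) :
    IsUnit (Ideal.Quotient.mk I r) :=
  hr.map (Ideal.Quotient.lift _ _ fun _ hx => map_algebraMap_le_ker_evalOneₐ hx)

end AdicCompletion

section WeierstrassOverCompletion

open AdicCompletion

variable {R : Type*} [CommRing R] (𝔭 : Ideal R)

theorem isAdicComplete_map_mk_pow (m : ℕ) :
    IsAdicComplete (𝔭.map (Ideal.Quotient.mk (𝔭 ^ m))) (R ⧸ 𝔭 ^ m) :=
  IsAdicComplete.of_isNilpotent ⟨m, by rw [← Ideal.map_pow, Ideal.map_quotient_self]; rfl⟩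

/-- Stands in for a Weierstrass factorization over `R̂ = AdicCompletion 𝔭 R` at `𝔭R̂`: when `𝔭`
is not finitely generated, `R̂` need not be `𝔭R̂`-adically complete. -/
def IsAdicWeierstrassPolynomial (a : R⟦X⟧) (P : (AdicCompletion 𝔭 R)[X]) : Prop :=
  ∀ m, ∃ u, (a.map (Ideal.Quotient.mk (𝔭 ^ m))).IsWeierstrassFactorizationAt
    (P.map (evalₐ 𝔭 m).toRingHom) u (𝔭.map (Ideal.Quotient.mk (𝔭 ^ m)))

variable {𝔭}

theorem PowerSeries.IsWeierstrassFactorizationAt.isAdicWeierstrassPolynomial {g : R⟦X⟧}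
    {P : (AdicCompletion 𝔭 R)[X]} {U : (AdicCompletion 𝔭 R)⟦X⟧}
    (H : (g.map (algebraMap R (AdicCompletion 𝔭 R))).IsWeierstrassFactorizationAt P U
      (𝔭.map (algebraMap R (AdicCompletion 𝔭 R)))) :
    IsAdicWeierstrassPolynomial 𝔭 g P := fun m => by
  have := H.map (evalₐ 𝔭 m).toRingHom
  rw [← RingHom.comp_apply (PowerSeries.map _), ← PowerSeries.map_comp, Ideal.map_map,
    evalₐ_comp_algebraMap] at this
  exact ⟨_, this⟩

namespace IsAdicWeierstrassPolynomial

variable {a b : R⟦X⟧} {P Q : (AdicCompletion 𝔭 R)[X]}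

theorem unique (hP : IsAdicWeierstrassPolynomial 𝔭 a P)
    (hQ : IsAdicWeierstrassPolynomial 𝔭 a Q) : P = Q :=
  polynomial_ext_evalₐ fun m => by
    obtain ⟨u, H⟩ := hP m
    obtain ⟨v, H'⟩ := hQ m
    have := isAdicComplete_map_mk_pow 𝔭 m
    exact (H.elim H').1

theorem mul (hP : IsAdicWeierstrassPolynomial 𝔭 a P) (hQ : IsAdicWeierstrassPolynomial 𝔭 b Q) :
    IsAdicWeierstrassPolynomial 𝔭 (a * b) (P * Q) := fun m => by
  obtain ⟨u, H⟩ := hP m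
  obtain ⟨v, H'⟩ := hQ m
  exact ⟨u * v, by simpa only [map_mul, Polynomial.map_mul] using H.mul H'⟩

theorem isUnit_algebraMap_constantCoeff (H : IsAdicWeierstrassPolynomial 𝔭 a P)
    (hP : IsUnit P) : IsUnit (algebraMap R (AdicCompletion 𝔭 R) (constantCoeff a)) := by
  refine isUnit_of_forall_isUnit_evalₐ fun m => ?_
  obtain ⟨u, Hm⟩ := H m
  have ha : IsUnit (a.map (Ideal.Quotient.mk (𝔭 ^ m))) := by
    rw [Hm.eq_mul]
    exact ((hP.map (Polynomial.mapRingHom _)).map Polynomial.coeToPowerSeries.ringHom).mul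
      Hm.isUnit
  rw [AdicCompletion.algebraMap_apply, Algebra.algebraMap_self, RingHom.id_apply, evalₐ_of]
  exact ha.map constantCoeff

end IsAdicWeierstrassPolynomial

theorem exists_isWeierstrassFactorizationAt_map_mk_pow {a : R⟦X⟧} {j : ℕ}
    (hlow : ∀ i < j, coeff i a ∈ 𝔭) (hunit : IsUnit (Ideal.Quotient.mk 𝔭 (coeff j a))) (m : ℕ) :
    ∃ f u, (a.map (Ideal.Quotient.mk (𝔭 ^ m))).IsWeierstrassFactorizationAt f u
      (𝔭.map (Ideal.Quotient.mk (𝔭 ^ m))) ∧ f.natDegree ≤ j := by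
  have := isAdicComplete_map_mk_pow 𝔭 m
  refine exists_isWeierstrassFactorizationAt (fun i hi => ?_) ?_
  · rw [coeff_map]
    exact Ideal.mem_map_of_mem _ (hlow i hi)
  · rw [coeff_map]
    rcases eq_or_ne m 0 with rfl | hm
    · rw [pow_zero, Ideal.one_eq_top]
      exact isUnit_of_subsingleton _
    · exact (Ideal.Quotient.isUnit_mk_pow_iff_isUnit_mk 𝔭 hm).mpr hunit

theorem exists_isAdicWeierstrassPolynomial {a : R⟦X⟧} {j : ℕ}
    (hlow : ∀ i < j, coeff i a ∈ 𝔭) (hunit : IsUnit (Ideal.Quotient.mk 𝔭 (coeff j a))) :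
    ∃ P, IsAdicWeierstrassPolynomial 𝔭 a P := by
  choose p u H hdeg using exists_isWeierstrassFactorizationAt_map_mk_pow hlow hunit
  have hcompat (m : ℕ) : (p (m + 1)).map (Ideal.Quotient.factorPow 𝔭 m.le_succ) = p m := by
    have := isAdicComplete_map_mk_pow 𝔭 m
    have H' := (H (m + 1)).map (Ideal.Quotient.factorPow 𝔭 m.le_succ)
    rw [← RingHom.comp_apply (PowerSeries.map _), ← PowerSeries.map_comp, Ideal.map_map,
      Ideal.Quotient.factorPow, Ideal.Quotient.factor_comp_mk] at H'
    exact (H'.elim (H m)).1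
  obtain ⟨P, hP⟩ := exists_polynomial_map_evalₐ_eq p hcompat hdeg
  exact ⟨P, fun m => ⟨u m, hP m ▸ H m⟩⟩

theorem exists_isAdicWeierstrassPolynomial_of_dvd [𝔭.IsPrime] {f a : R⟦X⟧} {n : ℕ}
    (hlow : ∀ i < n, coeff i (f.map (Ideal.Quotient.mk 𝔭)) = 0)
    (hunit : IsUnit (coeff n (f.map (Ideal.Quotient.mk 𝔭)))) (ha : a ∣ f) :
    ∃ P, IsAdicWeierstrassPolynomial 𝔭 a P := by
  obtain ⟨b, rfl⟩ := ha
  rw [map_mul] at hlow hunit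
  obtain ⟨j, hj, hju⟩ := exists_isUnit_coeff_of_mul hlow hunit
  refine exists_isAdicWeierstrassPolynomial (j := j) (fun i hi => ?_) ?_
  · simpa [Ideal.Quotient.eq_zero_iff_mem] using hj i hi
  · simpa using hju

end WeierstrassOverCompletion

open AdicCompletion

theorem stmt_19_general {R : Type*} [CommRing R] (𝔭 : Ideal R) (h𝔭 : 𝔭.IsPrime)
    (f : PowerSeries R) (n : ℕ)
    (hunit : IsUnit (Ideal.Quotient.mk (𝔭.map (algebraMap R (AdicCompletion 𝔭 R)))
      (PowerSeries.coeff n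
        (PowerSeries.map (algebraMap R (AdicCompletion 𝔭 R)) f))))
    (hlow : ∀ i < n, PowerSeries.coeff i
        (PowerSeries.map (algebraMap R (AdicCompletion 𝔭 R)) f) ∈
      𝔭.map (algebraMap R (AdicCompletion 𝔭 R)))
    (hdiv : ∀ d : R, d ∣ PowerSeries.constantCoeff f → ¬IsUnit d →
      ¬IsUnit (algebraMap R (AdicCompletion 𝔭 R) d))
    (P : Polynomial (AdicCompletion 𝔭 R)) (U : PowerSeries (AdicCompletion 𝔭 R))
    (hPmonic : P.Monic) (hPdeg : P.natDegree = n)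
    (hPW : ∀ i < n, P.coeff i ∈ 𝔭.map (algebraMap R (AdicCompletion 𝔭 R)))
    (hU : IsUnit U)
    (hfact : PowerSeries.map (algebraMap R (AdicCompletion 𝔭 R)) f =
      U * (P : PowerSeries (AdicCompletion 𝔭 R)))
    (hPirr : Irreducible P) :
    Irreducible f := by
  have hfP : IsAdicWeierstrassPolynomial 𝔭 f P :=
    IsWeierstrassFactorizationAt.isAdicWeierstrassPolynomial
      ⟨⟨⟨fun hi => hPW _ (hPdeg ▸ hi)⟩, hPmonic⟩, hU, hfact.trans (mul_comm _ _)⟩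
  have hred_low : ∀ i < n, coeff i (f.map (Ideal.Quotient.mk 𝔭)) = 0 := fun i hi => by
    rw [coeff_map, Ideal.Quotient.eq_zero_iff_mem]
    exact mem_of_algebraMap_mem_map (by simpa only [coeff_map] using hlow i hi)
  have hred_unit : IsUnit (coeff n (f.map (Ideal.Quotient.mk 𝔭))) := by
    rw [coeff_map]
    exact isUnit_mk_of_isUnit_mk_algebraMap (by simpa only [coeff_map] using hunit)
  have hunit_of_dvd {c : R⟦X⟧} {Pc} (hc : c ∣ f) (hPc : IsAdicWeierstrassPolynomial 𝔭 c Pc)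
      (hu : IsUnit Pc) : IsUnit c :=
    isUnit_iff_constantCoeff.mpr <| not_imp_not.mp (hdiv _ (map_dvd constantCoeff hc))
      (hPc.isUnit_algebraMap_constantCoeff hu)
  refine ⟨fun hf => ?_, fun a b hab => ?_⟩
  · have hn : n ≠ 0 := by
      rintro rfl
      exact hPirr.not_isUnit (hPmonic.natDegree_eq_zero.mp hPdeg ▸ isUnit_one)
    refine (isUnit_iff_constantCoeff.mp (hf.map (PowerSeries.map (Ideal.Quotient.mk 𝔭)))).ne_zero ?_
    rw [← coeff_zero_eq_constantCoeff_apply]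
    exact hred_low 0 (Nat.pos_of_ne_zero hn)
  have ha : a ∣ f := Dvd.intro b hab.symm
  have hb : b ∣ f := Dvd.intro_left a hab.symm
  obtain ⟨Pa, hPa⟩ := exists_isAdicWeierstrassPolynomial_of_dvd hred_low hred_unit ha
  obtain ⟨Pb, hPb⟩ := exists_isAdicWeierstrassPolynomial_of_dvd hred_low hred_unit hb
  exact (hPirr.isUnit_or_isUnit (hfP.unique (hab ▸ hPa.mul hPb))).imp
    (hunit_of_dvd ha hPa) (hunit_of_dvd hb hPb)

theorem stmt_19 {R : Type*} [CommRing R] [IsDomain R] (𝔭 : Ideal R) (h𝔭 : 𝔭.IsPrime)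
    [IsDomain (AdicCompletion 𝔭 R)]
    (hinj : Function.Injective (algebraMap R (AdicCompletion 𝔭 R)))
    (f : PowerSeries R) (n : ℕ)
    (hunit : IsUnit (Ideal.Quotient.mk (𝔭.map (algebraMap R (AdicCompletion 𝔭 R)))
      (PowerSeries.coeff n
        (PowerSeries.map (algebraMap R (AdicCompletion 𝔭 R)) f))))
    (hlow : ∀ i < n, PowerSeries.coeff i
        (PowerSeries.map (algebraMap R (AdicCompletion 𝔭 R)) f) ∈
      𝔭.map (algebraMap R (AdicCompletion 𝔭 R)))
    (hdiv : ∀ d : R, d ∣ PowerSeries.constantCoeff f → ¬IsUnit d →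
      ¬IsUnit (algebraMap R (AdicCompletion 𝔭 R) d))
    (P : Polynomial (AdicCompletion 𝔭 R)) (U : PowerSeries (AdicCompletion 𝔭 R))
    (hPmonic : P.Monic) (hPdeg : P.natDegree = n)
    (hPW : ∀ i < n, P.coeff i ∈ 𝔭.map (algebraMap R (AdicCompletion 𝔭 R)))
    (hU : IsUnit U)
    (hfact : PowerSeries.map (algebraMap R (AdicCompletion 𝔭 R)) f =
      U * (P : PowerSeries (AdicCompletion 𝔭 R)))
    (hPirr : Irreducible P) :
    Irreducible f :=
  stmt_19_general 𝔭 h𝔭 f n hunit hlow hdiv P U hPmonic hPdeg hPW hU hfact hPirr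
end
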